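/- arXiv:math/0604309 — 11 statements merged into one kernel-verified Lean document; each statement's English description precedes it below -/
import Mathlib

section
/- If the set SD := ⋃_{ε>0} SD_ε of sensitive points of a continuous map g : X → X contains a transitive point x (i.e., a point whose forward orbit is dense in X), then there exists ε > 0 with SD_ε = X, i.e., g has sensitive dependence on initial conditions. -/
/-- If the set SD = ⋃_{ε>0} SD_ε of sensitive points of a continuous map
`g` contains a transitive point, then `g` has sensitive dependence on initial
conditions, i.e. SD_ε = X for some ε > 0. -/
theorem sensitive_of_transitive_sensitive_point {X : Type*} [MetricSpace X] [CompactSpace X]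
    (g : X → X) (hg : Continuous g) (x : X)
    (htrans : closure (Set.range fun n : ℕ => g^[n] x) = Set.univ)
    (hsens : ∃ ε > 0, ∀ δ > 0, ∃ y ∈ Metric.closedBall x δ, ∃ z ∈ Metric.closedBall x δ,
        ∃ n : ℕ, ε ≤ dist (g^[n] y) (g^[n] z)) :
    ∃ ε > 0, {x' : X | ∀ δ > 0, ∃ y ∈ Metric.closedBall x' δ, ∃ z ∈ Metric.closedBall x' δ,
        ∃ n : ℕ, ε ≤ dist (g^[n] y) (g^[n] z)} = Set.univ := by
  obtain ⟨ε, εpos, hx⟩ := hsens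
  refine ⟨ε, εpos, Set.eq_univ_of_forall fun x' => ?_⟩
  intro δ δpos
  -- find a point of the orbit near x'
  have hx' : x' ∈ closure (Set.range fun n : ℕ => g^[n] x) := by
    rw [htrans]; trivial
  obtain ⟨p, hp, hpd⟩ := Metric.mem_closure_iff.mp hx' (δ / 2) (by linarith)
  obtain ⟨m, rfl⟩ := hp
  -- uniform continuity of each iterate
  have hk : ∀ k : ℕ, ∃ η > 0, ∀ a b : X, dist a b < η →
      dist (g^[k] a) (g^[k] b) < min ε (δ / 2) := by
    intro k
    have hu : UniformContinuous g^[k] :=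
      CompactSpace.uniformContinuous_of_continuous (hg.iterate k)
    exact Metric.uniformContinuous_iff.mp hu _ (lt_min εpos (by linarith))
  choose η ηpos hη using hk
  have hne : (Finset.range (m + 1)).Nonempty := ⟨0, by simp⟩
  set M : ℝ := (Finset.range (m + 1)).inf' hne η with hM
  have Mpos : 0 < M := by
    rw [hM, Finset.lt_inf'_iff]
    intro k _; exact ηpos k
  have hMle : ∀ k ≤ m, M ≤ η k := fun k hk' =>
    Finset.inf'_le _ (Finset.mem_range.mpr (Nat.lt_succ_of_le hk'))
  obtain ⟨y, hy, z, hz, n, hn⟩ := hx (M / 3) (by linarith)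
  have hyx : dist y x ≤ M / 3 := Metric.mem_closedBall.mp hy
  have hzx : dist z x ≤ M / 3 := Metric.mem_closedBall.mp hz
  -- n > m
  have hmn : m < n := by
    by_contra h
    push_neg at h
    have hyz : dist y z < η n := by
      calc dist y z ≤ dist y x + dist x z := dist_triangle _ _ _
        _ ≤ M / 3 + M / 3 := by rw [dist_comm x z]; linarith
        _ < M := by linarith
        _ ≤ η n := hMle n h
    have := hη n y z hyz
    have := min_le_left ε (δ / 2)
    linarith
  -- images of y, z under g^[m] are in the δ-ball around x'
  have key : ∀ w : X, dist w x ≤ M / 3 → g^[m] w ∈ Metric.closedBall x' δ := by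
    intro w hw
    have h1 : dist (g^[m] w) (g^[m] x) < min ε (δ / 2) :=
      hη m w x (lt_of_le_of_lt hw (by linarith [hMle m le_rfl]))
    have h2 : dist (g^[m] w) (g^[m] x) < δ / 2 :=
      lt_of_lt_of_le h1 (min_le_right _ _)
    have h3 : dist x' (g^[m] x) < δ / 2 := hpd
    rw [Metric.mem_closedBall]
    calc dist (g^[m] w) x' ≤ dist (g^[m] w) (g^[m] x) + dist (g^[m] x) x' :=
          dist_triangle _ _ _
      _ ≤ δ / 2 + δ / 2 := by rw [dist_comm (g^[m] x) x']; linarith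
      _ = δ := by ring
  refine ⟨g^[m] y, key y hyx, g^[m] z, key z hzx, n - m, ?_⟩
  have hiter : ∀ w : X, g^[n - m] (g^[m] w) = g^[n] w := by
    intro w
    rw [← Function.iterate_add_apply, Nat.sub_add_cancel hmn.le]
  rw [hiter, hiter]
  exact hn
end

section
/- Let g : X → X be continuous on a compact metric space X without isolated points. If g is transitive and every transitive point is Lyapunov stable (i.e., Tr ⊆ LS) and Tr ≠ ∅, then Tr = LS; consequently, either g has sensitive dependence on initial conditions or the set of transitive points equals the set of Lyapunov stable points. -/
/-- If `X` has no isolated points, `g` is transitive, every transitive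
point is Lyapunov stable and there exists a transitive point, then the set of
transitive points equals the set of Lyapunov stable points; consequently either `g`
has sensitive dependence on initial conditions or Tr = LS. -/
theorem transitive_eq_lyapunov_stable {X : Type*} [MetricSpace X] [CompactSpace X]
    (hX : ∀ x : X, ¬ IsOpen ({x} : Set X))
    (g : X → X) (hg : Continuous g)
    (Tr : Set X) (hTr : Tr = {x : X | closure (Set.range fun n : ℕ => g^[n] x) = Set.univ})
    (LS : Set X) (hLS : LS = {x : X | ∀ ε > 0, ∃ δ > 0,
        ∀ y ∈ Metric.closedBall x δ, ∀ z ∈ Metric.closedBall x δ,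
          ∀ n : ℕ, dist (g^[n] y) (g^[n] z) < ε})
    (hsub : Tr ⊆ LS) (hne : Tr.Nonempty) :
    Tr = LS ∧
      ((∃ ε > 0, {x : X | ∀ δ > 0, ∃ y ∈ Metric.closedBall x δ, ∃ z ∈ Metric.closedBall x δ,
          ∃ n : ℕ, ε ≤ dist (g^[n] y) (g^[n] z)} = Set.univ) ∨ Tr = LS) := by
  have hNB : ∀ x : X, Filter.NeBot (nhdsWithin x ({x}ᶜ)) := by
    intro x
    refine Filter.neBot_iff.mpr fun h => hX x ?_
    exact (isOpen_singleton_iff_punctured_nhds x).mpr h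
  have key : Tr = LS := by
    apply Set.Subset.antisymm hsub
    intro x hx
    obtain ⟨t, ht⟩ := hne
    rw [hLS] at hx
    rw [hTr] at ht ⊢
    simp only [Set.mem_setOf_eq] at hx ht ⊢
    rw [← dense_iff_closure_eq] at ht ⊢
    rw [Metric.dense_iff]
    intro z r hr
    obtain ⟨δ, hδ, hδprop⟩ := hx (r / 2) (by linarith)
    -- find m with g^[m] t ∈ ball x δ
    obtain ⟨p, hp, hpmem⟩ := (Metric.dense_iff.mp ht) x δ hδ
    obtain ⟨m, rfl⟩ := hpmem
    -- the tail orbit of s := g^[m] t is dense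
    set s := g^[m] t with hs
    have htail : Dense (Set.range fun n : ℕ => g^[n] s) := by
      haveI : T1Space X := inferInstance
      have hdiff : Dense ((Set.range fun n : ℕ => g^[n] t) \
          ((fun n : ℕ => g^[n] t) '' (Set.Iio m))) :=
        ht.diff_finite ((Set.finite_Iio m).image _)
      refine hdiff.mono ?_
      rintro y ⟨⟨k, rfl⟩, hy2⟩
      have hkm : m ≤ k := by
        by_contra h
        exact hy2 ⟨k, Set.mem_Iio.mpr (by omega), rfl⟩
      exact ⟨k - m, by
        show g^[k - m] (g^[m] t) = g^[k] t
        rw [← Function.iterate_add_apply]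
        congr 1
        omega⟩
    obtain ⟨q, hq, hqmem⟩ := (Metric.dense_iff.mp htail) z (r / 2) (by linarith)
    obtain ⟨n, rfl⟩ := hqmem
    refine ⟨g^[n] x, ?_, ⟨n, rfl⟩⟩
    have hxball : x ∈ Metric.closedBall x δ := Metric.mem_closedBall_self hδ.le
    have hsball : s ∈ Metric.closedBall x δ :=
      Metric.ball_subset_closedBall hp
    have h1 := hδprop x hxball s hsball n
    have h2 : dist (g^[n] s) z < r / 2 := by
      rw [Metric.mem_ball] at hq; exact hq
    rw [Metric.mem_ball]
    calc dist (g^[n] x) z ≤ dist (g^[n] x) (g^[n] s) + dist (g^[n] s) z := dist_triangle _ _ _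
      _ < r / 2 + r / 2 := add_lt_add h1 h2
      _ = r := by ring
  exact ⟨key, Or.inr key⟩
end

section
/- If x is a nonwandering Lyapunov stable point of a continuous map g : X → X, then for every ε > 0 there are infinitely many n ∈ ℕ such that d(gⁿy, y) ≤ ε for all y in the closure of the orbit of x. In particular, g restricted to the orbit closure of x is uniformly rigid. -/
/-- If `x` is a nonwandering Lyapunov stable point of a continuous map
`g`, then for every `ε > 0` there are infinitely many `n` such that
`d(gⁿ y, y) ≤ ε` for all `y` in the orbit closure of `x`; in particular `g`
restricted to the orbit closure of `x` is uniformly rigid. -/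
theorem uniformly_rigid_of_nonwandering_lyapunov {X : Type*} [MetricSpace X] [CompactSpace X]
    (g : X → X) (hg : Continuous g) (x : X)
    (hnw : ∀ δ > 0, ∃ n > 0,
        (Metric.closedBall x δ ∩ g^[n] '' Metric.closedBall x δ).Nonempty)
    (hls : ∀ ε > 0, ∃ δ > 0, ∀ y ∈ Metric.closedBall x δ, ∀ z ∈ Metric.closedBall x δ,
        ∀ n : ℕ, dist (g^[n] y) (g^[n] z) < ε) :
    ∀ ε > 0,
      {n : ℕ | ∀ y ∈ closure (Set.range fun n : ℕ => g^[n] x),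
          dist (g^[n] y) y ≤ ε}.Infinite := by
  set K := closure (Set.range fun n : ℕ => g^[n] x) with hK
  -- forward invariance of K
  have hKinv : ∀ m : ℕ, ∀ y ∈ K, g^[m] y ∈ K := by
    intro m y hy
    have h1 : g^[m] '' K ⊆ closure (g^[m] '' Set.range fun n : ℕ => g^[n] x) :=
      image_closure_subset_closure_image (hg.iterate m)
    have h2 : (g^[m] '' Set.range fun n : ℕ => g^[n] x) ⊆
        Set.range fun n : ℕ => g^[n] x := by
      rintro _ ⟨_, ⟨k, rfl⟩, rfl⟩
      exact ⟨m + k, by simp [Function.iterate_add_apply]⟩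
    exact closure_mono h2 (h1 ⟨y, hy, rfl⟩)
  -- weak claim: for every c > 0 there exists n > 0 with dist (g^[n] y) y ≤ c on K
  have weak : ∀ c > (0:ℝ), ∃ n > 0, ∀ y ∈ K, dist (g^[n] y) y ≤ c := by
    intro c hc
    obtain ⟨δ, hδ, hδs⟩ := hls (c / 3) (by linarith)
    obtain ⟨n, hn, z, hz1, w, hw, hwz⟩ := hnw δ hδ
    refine ⟨n, hn, ?_⟩
    have hx : x ∈ Metric.closedBall x δ := Metric.mem_closedBall_self hδ.le
    -- on the orbit
    have horb : ∀ m : ℕ, dist (g^[n] (g^[m] x)) (g^[m] x) ≤ 2 * c / 3 := by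
      intro m
      have e1 : g^[n] (g^[m] x) = g^[m + n] x := by
        rw [Function.iterate_add_apply, Function.Commute.iterate_iterate_self]
      have e2 : g^[m + n] w = g^[m] z := by
        rw [Function.iterate_add_apply, hwz]
      have h1 : dist (g^[m + n] x) (g^[m + n] w) < c / 3 := hδs x hx w hw (m + n)
      have h2 : dist (g^[m] z) (g^[m] x) < c / 3 := hδs z hz1 x hx m
      calc dist (g^[n] (g^[m] x)) (g^[m] x)
          ≤ dist (g^[m + n] x) (g^[m + n] w) + dist (g^[m] z) (g^[m] x) := by
            rw [e1, ← e2]; exact dist_triangle _ _ _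
        _ ≤ 2 * c / 3 := by linarith
    -- extend to the closure
    intro y hy
    have hclosed : IsClosed {y : X | dist (g^[n] y) y ≤ 2 * c / 3} :=
      isClosed_le (((hg.iterate n).dist continuous_id)) continuous_const
    have : K ⊆ {y : X | dist (g^[n] y) y ≤ 2 * c / 3} := by
      rw [hK]
      apply closure_minimal _ hclosed
      rintro _ ⟨m, rfl⟩
      exact horb m
    have h := this hy
    simp only [Set.mem_setOf_eq] at h
    linarith [hc]
  -- additivity
  have add : ∀ (a b : ℝ) (n m : ℕ), (∀ y ∈ K, dist (g^[n] y) y ≤ a) →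
      (∀ y ∈ K, dist (g^[m] y) y ≤ b) → ∀ y ∈ K, dist (g^[n + m] y) y ≤ a + b := by
    intro a b n m ha hb y hy
    have : g^[n + m] y = g^[n] (g^[m] y) := Function.iterate_add_apply g n m y
    rw [this]
    calc dist (g^[n] (g^[m] y)) y ≤ dist (g^[n] (g^[m] y)) (g^[m] y) + dist (g^[m] y) y :=
          dist_triangle _ _ _
      _ ≤ a + b := add_le_add (ha _ (hKinv m y hy)) (hb y hy)
  -- unboundedness
  have main : ∀ (N : ℕ) (c : ℝ), 0 < c → ∃ n ≥ N, ∀ y ∈ K, dist (g^[n] y) y ≤ c := by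
    intro N
    induction N with
    | zero =>
      intro c hc
      obtain ⟨n, _, hn⟩ := weak c hc
      exact ⟨n, Nat.zero_le n, hn⟩
    | succ N ih =>
      intro c hc
      obtain ⟨n, hnN, hn⟩ := ih (c / 2) (by linarith)
      obtain ⟨m, hm0, hm⟩ := weak (c / 2) (by linarith)
      refine ⟨n + m, by omega, ?_⟩
      have := add (c / 2) (c / 2) n m hn hm
      intro y hy
      have := this y hy
      linarith
  intro ε hε
  intro hfin
  obtain ⟨b, hb⟩ := hfin.bddAbove
  obtain ⟨n, hnb, hn⟩ := main (b + 1) ε hε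
  have : n ≤ b := hb hn
  omega
end

section
/- If x is a nonwandering Lyapunov stable point of a continuous map g : X → X such that for every δ > 0 the return-time set R_δ(x) := {n > 0 : B_δ(x) ∩ gⁿ(B_δ(x)) ≠ ∅} is syndetic (has bounded gaps), then the family (gⁿ)_{n∈ℕ} restricted to the orbit closure of x is equicontinuous. -/
private lemma unif_iter_aux {X : Type*} [MetricSpace X] [CompactSpace X]
    {g : X → X} (hg : Continuous g) :
    ∀ (s : ℕ) (c : ℝ), 0 < c → ∃ η > 0, ∀ j ≤ s, ∀ a b : X,
      dist a b ≤ η → dist (g^[j] a) (g^[j] b) ≤ c := by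
  intro s
  induction s with
  | zero =>
    intro c hc
    refine ⟨c, hc, ?_⟩
    intro j hj a b hab
    interval_cases j
    simpa using hab
  | succ s ih =>
    intro c hc
    obtain ⟨ηs, hηs, H⟩ := ih c hc
    obtain ⟨η', hη', H'⟩ := Metric.uniformContinuous_iff.mp
      (CompactSpace.uniformContinuous_of_continuous hg) ηs hηs
    refine ⟨min (η'/2) c, by positivity, ?_⟩
    intro j hj a b hab
    match j with
    | 0 => simpa using hab.trans (min_le_right _ _)
    | (j+1) =>
      rw [Function.iterate_succ_apply, Function.iterate_succ_apply]
      refine H j (Nat.succ_le_succ_iff.mp hj) _ _ (le_of_lt (H' ?_))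
      calc dist a b ≤ η'/2 := hab.trans (min_le_left _ _)
        _ < η' := by linarith

/-- If `x` is a nonwandering Lyapunov stable point whose return-time
sets `R_δ(x)` are all syndetic, then the family `(gⁿ)` is equicontinuous on the
orbit closure of `x`. -/
theorem equicontinuous_of_syndetic_returns {X : Type*} [MetricSpace X] [CompactSpace X]
    (g : X → X) (hg : Continuous g) (x : X)
    (hnw : ∀ δ > 0, ∃ n > 0,
        (Metric.closedBall x δ ∩ g^[n] '' Metric.closedBall x δ).Nonempty)
    (hls : ∀ ε > 0, ∃ δ > 0, ∀ y ∈ Metric.closedBall x δ, ∀ z ∈ Metric.closedBall x δ,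
        ∀ n : ℕ, dist (g^[n] y) (g^[n] z) < ε)
    (hsyn : ∀ δ > 0, ∃ s : ℕ, ∀ n : ℕ, ∃ m, n ≤ m ∧ m ≤ n + s ∧ 0 < m ∧
        (Metric.closedBall x δ ∩ g^[m] '' Metric.closedBall x δ).Nonempty) :
    ∀ ε > 0, ∃ η > 0,
      ∀ y ∈ closure (Set.range fun n : ℕ => g^[n] x),
        ∀ z ∈ closure (Set.range fun n : ℕ => g^[n] x),
          dist y z ≤ η → ∀ n : ℕ, dist (g^[n] y) (g^[n] z) ≤ ε := by
  intro ε hε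
  -- δ₁ : stability radius for output ε/4, shrunk to be ≤ ε
  obtain ⟨δ₁', hδ₁', hS1⟩ := hls (ε/4) (by linarith)
  set δ₁ := min δ₁' ε with hδ₁def
  have hδ₁ : 0 < δ₁ := lt_min hδ₁' hε
  have hδ₁ε : δ₁ ≤ ε := min_le_right _ _
  have hS1' : ∀ y ∈ Metric.closedBall x δ₁, ∀ z ∈ Metric.closedBall x δ₁,
      ∀ n : ℕ, dist (g^[n] y) (g^[n] z) < ε/4 := by
    intro y hy z hz n
    exact hS1 y (Metric.closedBall_subset_closedBall (min_le_left _ _) hy)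
      z (Metric.closedBall_subset_closedBall (min_le_left _ _) hz) n
  -- δ₂ : stability radius for output δ₁/4, shrunk to be ≤ δ₁/4
  obtain ⟨δ₂', hδ₂', hS2⟩ := hls (δ₁/4) (by positivity)
  set δ₂ := min δ₂' (δ₁/4) with hδ₂def
  have hδ₂ : 0 < δ₂ := lt_min hδ₂' (by positivity)
  have hS2' : ∀ y ∈ Metric.closedBall x δ₂, ∀ z ∈ Metric.closedBall x δ₂,
      ∀ n : ℕ, dist (g^[n] y) (g^[n] z) < δ₁/4 := by
    intro y hy z hz n
    exact hS2 y (Metric.closedBall_subset_closedBall (min_le_left _ _) hy)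
      z (Metric.closedBall_subset_closedBall (min_le_left _ _) hz) n
  obtain ⟨s, hs⟩ := hsyn δ₂ hδ₂
  -- every window [n, n+s] contains a time m with g^[m] x ∈ B̄(x, δ₁/2)
  have hret : ∀ n : ℕ, ∃ m, n ≤ m ∧ m ≤ n + s ∧ g^[m] x ∈ Metric.closedBall x (δ₁/2) := by
    intro n
    obtain ⟨m, h1, h2, _h3, q, hq1, p, hp, hpq⟩ := hs n
    refine ⟨m, h1, h2, ?_⟩
    have hx : x ∈ Metric.closedBall x δ₂ := Metric.mem_closedBall_self hδ₂.le
    have hd1 : dist (g^[m] x) (g^[m] p) < δ₁/4 := hS2' x hx p hp m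
    have hd2 : dist q x ≤ δ₂ := hq1
    have hδ₂le : δ₂ ≤ δ₁/4 := min_le_right _ _
    rw [Metric.mem_closedBall]
    calc dist (g^[m] x) x ≤ dist (g^[m] x) (g^[m] p) + dist (g^[m] p) x := dist_triangle _ _ _
      _ = dist (g^[m] x) (g^[m] p) + dist q x := by rw [hpq]
      _ ≤ δ₁/4 + δ₂ := by linarith
      _ ≤ δ₁/2 := by linarith
  -- uniform continuity of the first s iterates
  obtain ⟨η, hη, Hη⟩ := unif_iter_aux hg s (δ₁/2) (by positivity)
  -- core claim for orbit points
  have core : ∀ a b : ℕ, dist (g^[a] x) (g^[b] x) ≤ η →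
      ∀ n : ℕ, dist (g^[n] (g^[a] x)) (g^[n] (g^[b] x)) ≤ ε/2 := by
    intro a b hab n
    obtain ⟨m, hm1, hm2, hmball⟩ := hret a
    set j := m - a with hjdef
    have hj : j ≤ s := by omega
    have hjy : g^[j] (g^[a] x) = g^[m] x := by
      rw [← Function.iterate_add_apply]; congr 1; omega
    by_cases hn : n < j
    · have h := Hη n (le_trans (le_of_lt hn) hj) _ _ hab
      linarith
    · push_neg at hn
      have hy' : g^[j] (g^[a] x) ∈ Metric.closedBall x δ₁ := by
        rw [hjy]
        exact Metric.closedBall_subset_closedBall (by linarith) hmball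
      have hd : dist (g^[j] (g^[a] x)) (g^[j] (g^[b] x)) ≤ δ₁/2 := Hη j hj _ _ hab
      have hz' : g^[j] (g^[b] x) ∈ Metric.closedBall x δ₁ := by
        rw [Metric.mem_closedBall]
        have := hy'
        rw [Metric.mem_closedBall, hjy] at this
        calc dist (g^[j] (g^[b] x)) x
            ≤ dist (g^[j] (g^[b] x)) (g^[j] (g^[a] x)) + dist (g^[j] (g^[a] x)) x :=
              dist_triangle _ _ _
          _ ≤ δ₁/2 + δ₁/2 := by
              rw [dist_comm] at hd
              rw [hjy] at hd ⊢
              have := Metric.mem_closedBall.mp hmball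
              linarith
          _ = δ₁ := by ring
      have h := hS1' _ hy' _ hz' (n - j)
      have e1 : g^[n - j] (g^[j] (g^[a] x)) = g^[n] (g^[a] x) := by
        rw [← Function.iterate_add_apply]; congr 1; omega
      have e2 : g^[n - j] (g^[j] (g^[b] x)) = g^[n] (g^[b] x) := by
        rw [← Function.iterate_add_apply]; congr 1; omega
      rw [e1, e2] at h
      linarith
  -- extend to the closure
  refine ⟨η/2, by positivity, ?_⟩
  intro y hy z hz hyz n
  obtain ⟨νy, hνy, Hy⟩ := Metric.continuousAt_iff.mp ((hg.iterate n).continuousAt)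
    (ε/8) (by linarith)
  obtain ⟨νz, hνz, Hz⟩ := Metric.continuousAt_iff.mp ((hg.iterate n).continuousAt)
    (ε/8) (by linarith)
  obtain ⟨y', ⟨a, ha⟩, hya⟩ := Metric.mem_closure_iff.mp hy (min (η/4) νy)
    (lt_min (by positivity) hνy)
  obtain ⟨z', ⟨b, hb⟩, hzb⟩ := Metric.mem_closure_iff.mp hz (min (η/4) νz)
    (lt_min (by positivity) hνz)
  subst ha hb
  have hab : dist (g^[a] x) (g^[b] x) ≤ η := by
    have h1 : dist y (g^[a] x) ≤ η/4 := le_of_lt (lt_of_lt_of_le hya (min_le_left _ _))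
    have h2 : dist z (g^[b] x) ≤ η/4 := le_of_lt (lt_of_lt_of_le hzb (min_le_left _ _))
    calc dist (g^[a] x) (g^[b] x)
        ≤ dist (g^[a] x) y + dist y (g^[b] x) := dist_triangle _ _ _
      _ ≤ dist (g^[a] x) y + (dist y z + dist z (g^[b] x)) := by
          linarith [dist_triangle y z (g^[b] x)]
      _ ≤ η/4 + (η/2 + η/4) := by rw [dist_comm (g^[a] x) y]; linarith
      _ = η := by ring
  have hcore := core a b hab n
  have hy8 : dist (g^[n] (g^[a] x)) (g^[n] y) < ε/8 :=
    Hy (by rw [dist_comm] at hya; exact lt_of_lt_of_le hya (min_le_right _ _))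
  have hz8 : dist (g^[n] (g^[b] x)) (g^[n] z) < ε/8 :=
    Hz (by rw [dist_comm] at hzb; exact lt_of_lt_of_le hzb (min_le_right _ _))
  calc dist (g^[n] y) (g^[n] z)
      ≤ dist (g^[n] y) (g^[n] (g^[a] x)) + dist (g^[n] (g^[a] x)) (g^[n] z) :=
        dist_triangle _ _ _
    _ ≤ dist (g^[n] y) (g^[n] (g^[a] x)) +
        (dist (g^[n] (g^[a] x)) (g^[n] (g^[b] x)) + dist (g^[n] (g^[b] x)) (g^[n] z)) := by
        linarith [dist_triangle (g^[n] (g^[a] x)) (g^[n] (g^[b] x)) (g^[n] z)]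
    _ ≤ ε/8 + (ε/2 + ε/8) := by rw [dist_comm (g^[n] y)]; linarith
    _ ≤ ε := by linarith
end

section
/- Let g : X → X be continuous on a compact metric space, μ a finite g-invariant Borel measure on X, and x a point in the topological support of μ. Then for every δ > 0 the set R_δ(x) := {n > 0 : B_δ(x) ∩ gⁿ(B_δ(x)) ≠ ∅} has bounded gaps: there exists s ∈ ℕ such that for every r ∈ ℕ there is j ∈ {0,…,s} with r + j ∈ R_δ(x). -/
/-!
Let `U` be the open `δ`-ball, of positive measure because `x` is in the support. The preimages
`g⁻ⁿ U` all have measure `μ U`, while the partial unions `⋃_{k ≤ N} g⁻ᵏ U` exhaust `⋃ₙ g⁻ⁿ U` up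
to measure less than `μ U` once `N` is large. So every `g⁻ᵐ U` meets some `g⁻ᵏ U` with `k ≤ N`;
taking `m = r + N + 1` gives a return of `U` to itself at a time in `r + [1, N + 1]`.
-/

open MeasureTheory Set
open scoped ENNReal

theorem MeasureTheory.exists_forall_inter_accumulate_nonempty {α ι : Type*}
    [MeasurableSpace α] {μ : Measure α} [IsFiniteMeasure μ] [Preorder ι] [IsDirectedOrder ι]
    [Nonempty ι] [(Filter.atTop : Filter ι).IsCountablyGenerated] {s : ι → Set α}
    (hs : ∀ i, NullMeasurableSet (s i) μ) {c : ℝ≥0∞} (hc : c ≠ 0) (hsc : ∀ i, c ≤ μ (s i)) :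
    ∃ N, ∀ i, (s i ∩ accumulate s N).Nonempty := by
  obtain ⟨i₀⟩ := ‹Nonempty ι›
  have hc_le : c ≤ μ (⋃ i, s i) := (hsc i₀).trans (measure_mono (subset_iUnion s i₀))
  have h_lt : μ (⋃ i, s i) - c < ⨆ N, μ (accumulate s N) := by
    rw [← measure_iUnion_eq_iSup_accumulate]
    exact ENNReal.sub_lt_self (measure_ne_top _ _) (ne_bot_of_le_ne_bot hc hc_le) hc
  obtain ⟨N, hN⟩ := lt_iSup_iff.mp h_lt
  refine ⟨N, fun i ↦ not_disjoint_iff_nonempty_inter.mp fun hdisj ↦ hN.not_ge ?_⟩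
  refine ENNReal.le_sub_of_add_le_right (ne_top_of_le_ne_top (measure_ne_top μ (s i)) (hsc i)) ?_
  calc μ (accumulate s N) + c ≤ μ (accumulate s N) + μ (s i) := by gcongr; exact hsc i
    _ = μ (accumulate s N ∪ s i) := (measure_union₀ (hs i) hdisj.symm.aedisjoint).symm
    _ ≤ μ (⋃ i, s i) := measure_mono (union_subset (accumulate_subset_iUnion N) (subset_iUnion s i))

theorem MeasureTheory.MeasurePreserving.exists_forall_image_iterate_inter_nonempty {α : Type*}
    [MeasurableSpace α] {μ : Measure α} [IsFiniteMeasure μ] {f : α → α}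
    (hf : MeasurePreserving f μ μ) {U : Set α} (hU : NullMeasurableSet U μ) (hU₀ : μ U ≠ 0) :
    ∃ s : ℕ, ∀ r : ℕ, ∃ j ≤ s, 0 < r + j ∧ (U ∩ f^[r + j] '' U).Nonempty := by
  obtain ⟨N, hN⟩ := exists_forall_inter_accumulate_nonempty (s := fun n ↦ f^[n] ⁻¹' U)
    (fun n ↦ hU.preimage (hf.iterate n).quasiMeasurePreserving) hU₀
    (fun n ↦ ((hf.iterate n).measure_preimage hU).ge)
  refine ⟨N + 1, fun r ↦ ?_⟩
  obtain ⟨y, hy, hy_acc⟩ := hN (r + N + 1)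
  obtain ⟨k, hk, hky⟩ := mem_accumulate.mp hy_acc
  -- `f^[r + N + 1] y ∈ U` is reached from `f^[k] y ∈ U` after `r + (N + 1 - k)` steps.
  refine ⟨N + 1 - k, by omega, by omega, f^[r + N + 1] y, hy, f^[k] y, hky, ?_⟩
  rw [← Function.iterate_add_apply]
  congr 1
  omega

theorem returns_syndetic_of_support_general {X : Type*} [MetricSpace X]
    [MeasurableSpace X] [BorelSpace X]
    (g : X → X) (hg : Continuous g) (μ : Measure X) [IsFiniteMeasure μ]
    (hinv : ∀ A : Set X, MeasurableSet A → μ (g ⁻¹' A) = μ A)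
    (x : X) (hsupp : ∀ U : Set X, IsOpen U → x ∈ U → 0 < μ U) :
    ∀ δ > 0, ∃ s : ℕ, ∀ r : ℕ, ∃ j ≤ s, 0 < r + j ∧
      (Metric.closedBall x δ ∩ g^[r + j] '' Metric.closedBall x δ).Nonempty := by
  intro δ hδ
  have hg_mp : MeasurePreserving g μ μ :=
    ⟨hg.measurable, Measure.ext fun A hA ↦ by rw [Measure.map_apply hg.measurable hA, hinv A hA]⟩
  obtain ⟨s, hs⟩ := hg_mp.exists_forall_image_iterate_inter_nonempty
    Metric.isOpen_ball.measurableSet.nullMeasurableSet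
    (hsupp _ Metric.isOpen_ball (Metric.mem_ball_self hδ)).ne'
  refine ⟨s, fun r ↦ ?_⟩
  obtain ⟨j, hj, hpos, hret⟩ := hs r
  exact ⟨j, hj, hpos, hret.mono (inter_subset_inter Metric.ball_subset_closedBall
    (image_mono Metric.ball_subset_closedBall))⟩

/-- If `x` lies in the topological support of a finite invariant measure
of a continuous map `g`, then every return-time set `R_δ(x)` has bounded gaps. -/
theorem returns_syndetic_of_support {X : Type*} [MetricSpace X] [CompactSpace X]
    [MeasurableSpace X] [BorelSpace X]
    (g : X → X) (hg : Continuous g) (μ : Measure X) [IsFiniteMeasure μ]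
    (hinv : ∀ A : Set X, MeasurableSet A → μ (g ⁻¹' A) = μ A)
    (x : X) (hsupp : ∀ U : Set X, IsOpen U → x ∈ U → 0 < μ U) :
    ∀ δ > 0, ∃ s : ℕ, ∀ r : ℕ, ∃ j ≤ s, 0 < r + j ∧
      (Metric.closedBall x δ ∩ g^[r + j] '' Metric.closedBall x δ).Nonempty :=
  returns_syndetic_of_support_general g hg μ hinv x hsupp
end

section
/- (Glasner–Weiss dichotomy) Let X be a compact metric space without isolated points and g : X → X a continuous transitive map admitting a finite invariant measure with full topological support. Then either g has sensitive dependence on initial conditions, or the family (gⁿ)_{n∈ℕ} is equicontinuous and g is a minimal homeomorphism of X. -/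
open MeasureTheory

private lemma gw_unif_fin {X : Type*} [MetricSpace X] [CompactSpace X]
    {g : X → X} (hg : Continuous g) (K : ℕ) {θ : ℝ} (hθ : 0 < θ) :
    ∃ η > 0, ∀ u v : X, dist u v ≤ η → ∀ n ≤ K, dist (g^[n] u) (g^[n] v) ≤ θ := by
  induction K with
  | zero =>
    refine ⟨θ, hθ, fun u v huv n hn => ?_⟩
    have : n = 0 := by omega
    subst this
    simpa using huv
  | succ K ih =>
    obtain ⟨η₀, hη₀, h₀⟩ := ih
    have hu : UniformContinuous (g^[K+1]) :=
      CompactSpace.uniformContinuous_of_continuous (hg.iterate _)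
    obtain ⟨η₁, hη₁, h₁⟩ := Metric.uniformContinuous_iff.1 hu θ hθ
    refine ⟨min η₀ (η₁/2), by positivity, fun u v huv n hn => ?_⟩
    rcases Nat.lt_or_ge n (K+1) with h | h
    · exact h₀ u v (le_trans huv (min_le_left _ _)) n (by omega)
    · have hn' : n = K + 1 := by omega
      subst hn'
      have hlt : dist u v < η₁ := by
        have := le_trans huv (min_le_right _ _); linarith
      exact le_of_lt (h₁ hlt)

private lemma gw_pair {X : Type*} [MetricSpace X] (g : X → X) (x₀ y : X) {r : ℝ}
    (p q : ℕ)
    (hp : ∀ m, dist (g^[m + p] y) (g^[m] x₀) ≤ r)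
    (hq : ∀ m, dist (g^[m + q] y) (g^[m] x₀) ≤ r) (s : ℕ) :
    dist (g^[s + p] x₀) (g^[s + q] x₀) ≤ 2 * r := by
  have h1 := hq (s + p)
  have h2 := hp (s + q)
  have e : s + p + q = s + q + p := by omega
  rw [e] at h1
  rw [dist_comm] at h1
  calc dist (g^[s + p] x₀) (g^[s + q] x₀)
      ≤ dist (g^[s + p] x₀) (g^[s + q + p] y) + dist (g^[s + q + p] y) (g^[s + q] x₀) :=
        dist_triangle _ _ _
    _ ≤ 2 * r := by linarith

private lemma gw_meas {X : Type*} [MetricSpace X] [CompactSpace X] [MeasurableSpace X]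
    [BorelSpace X] {g : X → X} (hg : Continuous g) (μ : Measure X) [IsFiniteMeasure μ]
    (hinv : ∀ A : Set X, MeasurableSet A → μ (g ⁻¹' A) = μ A)
    {B : Set X} (hB : IsClosed B) (hμB : 0 < μ B) (a : ℕ → ℕ) :
    ∃ y : X, ∀ N : ℕ, ∃ j, N ≤ j ∧ g^[a j] y ∈ B := by
  have hBm : MeasurableSet B := hB.measurableSet
  have hpre : ∀ k : ℕ, μ ((g^[k]) ⁻¹' B) = μ B := by
    intro k
    induction k with
    | zero => simp
    | succ k ih =>
      rw [Function.iterate_succ, Set.preimage_comp, hinv _ ((hg.iterate k).measurable hBm), ih]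
  set C : ℕ → Set X := fun i => (g^[a i]) ⁻¹' B with hC
  have hCm : ∀ i, MeasurableSet (C i) := fun i => (hg.iterate (a i)).measurable hBm
  set E : ℕ → Set X := fun N => ⋃ i, C (N + i) with hE
  have hEm : ∀ N, MeasurableSet (E N) := fun N => MeasurableSet.iUnion fun i => hCm _
  have hanti : Antitone E := by
    intro N M hNM x hx
    obtain ⟨i, hi⟩ := Set.mem_iUnion.1 hx
    refine Set.mem_iUnion.2 ⟨(M - N) + i, ?_⟩
    have e : N + ((M - N) + i) = M + i := by omega
    rw [e]; exact hi
  have hEB : ∀ N, μ B ≤ μ (E N) := by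
    intro N
    have h1 : C N ⊆ E N := by
      intro x hx
      exact Set.mem_iUnion.2 ⟨0, by simpa using hx⟩
    calc μ B = μ (C N) := (hpre (a N)).symm
      _ ≤ μ (E N) := measure_mono h1
  have hlim := MeasureTheory.tendsto_measure_iInter_atTop
    (fun N => (hEm N).nullMeasurableSet) hanti ⟨0, measure_ne_top μ _⟩
  have hge : μ B ≤ μ (⋂ N, E N) := ge_of_tendsto' hlim hEB
  have hpos : μ (⋂ N, E N) ≠ 0 := by
    intro h
    rw [h] at hge
    exact absurd (lt_of_lt_of_le hμB hge) (lt_irrefl _)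
  obtain ⟨y, hy⟩ := nonempty_of_measure_ne_zero hpos
  refine ⟨y, fun N => ?_⟩
  have hEy := Set.mem_iInter.1 hy N
  obtain ⟨i, hi⟩ := Set.mem_iUnion.1 hEy
  exact ⟨N + i, by omega, hi⟩

/-- Glasner–Weiss dichotomy: a continuous transitive map of a compact
metric space without isolated points admitting a finite invariant measure of full
support either has sensitive dependence on initial conditions, or `(gⁿ)` is
equicontinuous and `g` is a minimal homeomorphism. -/
theorem glasner_weiss_dichotomy {X : Type*} [MetricSpace X] [CompactSpace X]
    [MeasurableSpace X] [BorelSpace X]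
    (hX : ∀ x : X, ¬ IsOpen ({x} : Set X))
    (g : X → X) (hg : Continuous g)
    (htrans : ∃ x : X, closure (Set.range fun n : ℕ => g^[n] x) = Set.univ)
    (μ : Measure X) [IsFiniteMeasure μ]
    (hinv : ∀ A : Set X, MeasurableSet A → μ (g ⁻¹' A) = μ A)
    (hfull : ∀ U : Set X, IsOpen U → U.Nonempty → 0 < μ U) :
    (∃ ε > 0, ∀ x : X, ∀ δ > 0, ∃ y ∈ Metric.closedBall x δ,
        ∃ n : ℕ, ε < dist (g^[n] x) (g^[n] y)) ∨
    ((∀ ε > 0, ∃ δ > 0, ∀ y z : X, dist y z ≤ δ →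
        ∀ n : ℕ, dist (g^[n] y) (g^[n] z) ≤ ε) ∧
      Function.Bijective g ∧
      ∀ x : X, closure (Set.range fun n : ℕ => g^[n] x) = Set.univ) := by
  by_cases hsens : (∃ ε > 0, ∀ x : X, ∀ δ > 0, ∃ y ∈ Metric.closedBall x δ,
      ∃ n : ℕ, ε < dist (g^[n] x) (g^[n] y))
  · exact Or.inl hsens
  right
  push_neg at hsens
  obtain ⟨x₀, hx₀⟩ := htrans
  -- the orbit of x₀ is dense
  have hdense : ∀ (w : X) (θ : ℝ), 0 < θ → ∃ k : ℕ, dist (g^[k] x₀) w < θ := by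
    intro w θ hθ
    have hw : w ∈ closure (Set.range fun n : ℕ => g^[n] x₀) := by
      rw [hx₀]; trivial
    obtain ⟨b, ⟨k, rfl⟩, hb⟩ := Metric.mem_closure_iff.1 hw θ hθ
    exact ⟨k, by rwa [dist_comm]⟩
  have hDense : Dense (Set.range fun n : ℕ => g^[n] x₀) := by
    rw [dense_iff_closure_eq]; exact hx₀
  -- tails of the orbit are dense (uses absence of isolated points)
  have htail : ∀ (N : ℕ) (w : X) (θ : ℝ), 0 < θ → ∃ k, N ≤ k ∧ dist (g^[k] x₀) w < θ := by
    intro N w θ hθ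
    set S : Set X := (fun t : ℕ => g^[t] x₀) '' (Set.Iio N) with hSdef
    have hSfin : S.Finite := (Set.finite_Iio N).image _
    by_cases hU : (Metric.ball w θ \ S).Nonempty
    · have hUopen : IsOpen (Metric.ball w θ \ S) :=
        Metric.isOpen_ball.sdiff hSfin.isClosed
      obtain ⟨u, huU, k, rfl⟩ := hDense.inter_open_nonempty _ hUopen hU
      refine ⟨k, ?_, by have := huU.1; rwa [Metric.mem_ball] at this⟩
      by_contra hk
      exact huU.2 ⟨k, Set.mem_Iio.2 (by omega), rfl⟩
    · exfalso
      have hball : Metric.ball w θ ⊆ S := by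
        intro v hv
        by_contra hvS
        exact hU ⟨v, hv, hvS⟩
      set V : Set X := Metric.ball w θ \ (S \ {w}) with hVdef
      have hVopen : IsOpen V :=
        Metric.isOpen_ball.sdiff ((hSfin.subset Set.diff_subset).isClosed)
      have hwV : w ∈ V := ⟨Metric.mem_ball_self hθ, fun h => h.2 rfl⟩
      have hVsub : V ⊆ {w} := by
        rintro v ⟨hv1, hv2⟩
        by_contra hvw
        exact hv2 ⟨hball hv1, hvw⟩
      have hVeq : V = {w} := Set.Subset.antisymm hVsub (by simpa using hwV)
      exact hX w (hVeq ▸ hVopen)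
  -- x₀ is an equicontinuity point
  have hL1 : ∀ ε : ℝ, 0 < ε → ∃ δ, 0 < δ ∧ ∀ y : X, dist x₀ y ≤ δ →
      ∀ n : ℕ, dist (g^[n] x₀) (g^[n] y) ≤ ε := by
    intro ε hε
    obtain ⟨x, δ₁, hδ₁, hstab⟩ := hsens (ε/3) (by positivity)
    obtain ⟨k, hk⟩ := hdense x δ₁ hδ₁
    have hmarg : 0 < δ₁ - dist (g^[k] x₀) x := by linarith
    obtain ⟨η₁, hη₁, hc⟩ := Metric.continuousAt_iff.1 (hg.iterate k).continuousAt
      (δ₁ - dist (g^[k] x₀) x) hmarg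
    obtain ⟨η₂, hη₂, hfin⟩ := gw_unif_fin hg k hε
    refine ⟨min (η₁/2) η₂, by positivity, fun y hy n => ?_⟩
    rcases le_or_gt n k with hn | hn
    · exact hfin x₀ y (le_trans hy (min_le_right _ _)) n hn
    · obtain ⟨s, rfl⟩ : ∃ s, n = s + k := ⟨n - k, by omega⟩
      have hyk : dist (g^[k] y) (g^[k] x₀) < δ₁ - dist (g^[k] x₀) x := by
        apply hc
        have h1 : dist x₀ y ≤ η₁/2 := le_trans hy (min_le_left _ _)
        rw [dist_comm] at h1
        linarith
      have hmem₀ : g^[k] x₀ ∈ Metric.closedBall x δ₁ := by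
        rw [Metric.mem_closedBall]; linarith
      have hmem₁ : g^[k] y ∈ Metric.closedBall x δ₁ := by
        rw [Metric.mem_closedBall]
        calc dist (g^[k] y) x ≤ dist (g^[k] y) (g^[k] x₀) + dist (g^[k] x₀) x :=
              dist_triangle _ _ _
          _ ≤ δ₁ := by linarith
      have h₀ := hstab _ hmem₀ s
      have h₁ := hstab _ hmem₁ s
      rw [Function.iterate_add_apply, Function.iterate_add_apply]
      rw [dist_comm] at h₀
      calc dist (g^[s] (g^[k] x₀)) (g^[s] (g^[k] y))
          ≤ dist (g^[s] (g^[k] x₀)) (g^[s] x) + dist (g^[s] x) (g^[s] (g^[k] y)) :=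
            dist_triangle _ _ _
        _ ≤ ε := by linarith
  -- "rho-balls" around x₀ : points whose whole forward orbit stays r-close to that of x₀
  set Bs : ℝ → Set X := fun r => ⋂ m : ℕ, (g^[m]) ⁻¹' Metric.closedBall (g^[m] x₀) r with hBsdef
  have hBs_closed : ∀ r, IsClosed (Bs r) :=
    fun r => isClosed_iInter fun m => Metric.isClosed_closedBall.preimage (hg.iterate m)
  have hBs_mem : ∀ (r : ℝ) (y : X), y ∈ Bs r ↔ ∀ m : ℕ, dist (g^[m] y) (g^[m] x₀) ≤ r := by
    intro r y
    simp [hBsdef, Set.mem_iInter, Metric.mem_closedBall]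
  have hBs_pos : ∀ {ε δ : ℝ}, 0 < δ →
      (∀ y : X, dist x₀ y ≤ δ → ∀ n : ℕ, dist (g^[n] x₀) (g^[n] y) ≤ ε) → 0 < μ (Bs ε) := by
    intro ε δ hδ hmod
    refine lt_of_lt_of_le
      (hfull _ Metric.isOpen_ball ⟨x₀, Metric.mem_ball_self hδ⟩) (measure_mono ?_)
    intro y hy
    rw [hBs_mem]
    intro m
    rw [dist_comm]
    exact hmod y (by rw [dist_comm]; exact le_of_lt (Metric.mem_ball.1 hy)) m
  have hBs_shift : ∀ {r : ℝ} {p : ℕ} {y : X}, g^[p] y ∈ Bs r →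
      ∀ m : ℕ, dist (g^[m + p] y) (g^[m] x₀) ≤ r := by
    intro r p y hy m
    rw [Function.iterate_add_apply]
    exact (hBs_mem r _).1 hy m
  -- uniform rigidity
  have hrig1 : ∀ ε : ℝ, 0 < ε → ∃ n : ℕ, 1 ≤ n ∧ ∀ w : X, dist (g^[n] w) w ≤ ε := by
    intro ε hε
    obtain ⟨δ, hδ, hmod⟩ := hL1 (ε/4) (by positivity)
    obtain ⟨y, hy⟩ := gw_meas hg μ hinv (hBs_closed (ε/4)) (hBs_pos hδ hmod) id
    obtain ⟨i, -, hyi⟩ := hy 0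
    obtain ⟨j, hj, hyj⟩ := hy (i + 1)
    have hst : ∀ s : ℕ, dist (g^[s + i] x₀) (g^[s + j] x₀) ≤ 2 * (ε/4) :=
      fun s => gw_pair g x₀ y i j (hBs_shift hyi) (hBs_shift hyj) s
    refine ⟨j - i, by omega, fun w => ?_⟩
    set n := j - i with hn
    have horb : ∀ t : ℕ, i ≤ t → dist (g^[n + t] x₀) (g^[t] x₀) ≤ ε/2 := by
      intro t ht
      have h := hst (t - i)
      have e1 : t - i + i = t := by omega
      have e2 : t - i + j = n + t := by omega
      rw [e1, e2] at h
      rw [dist_comm] at h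
      linarith
    have key : ∀ γ : ℝ, 0 < γ → dist (g^[n] w) w ≤ ε/2 + γ := by
      intro γ hγ
      obtain ⟨θ, hθ, hcont⟩ := Metric.continuousAt_iff.1 (hg.iterate n).continuousAt
        (γ/2) (by positivity)
      obtain ⟨t, hti, htd⟩ := htail i w (min θ (γ/2)) (by positivity)
      have h1 : dist (g^[n] (g^[t] x₀)) (g^[n] w) < γ/2 :=
        hcont (lt_of_lt_of_le htd (min_le_left _ _))
      have h3 : dist (g^[t] x₀) w < γ/2 := lt_of_lt_of_le htd (min_le_right _ _)
      have e : g^[n] (g^[t] x₀) = g^[n + t] x₀ := (Function.iterate_add_apply g n t x₀).symm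
      have h1' : dist (g^[n] w) (g^[n] (g^[t] x₀)) ≤ γ/2 := by
        rw [dist_comm]; linarith
      have h2' : dist (g^[n] (g^[t] x₀)) (g^[t] x₀) ≤ ε/2 := by
        rw [e]; exact horb t hti
      calc dist (g^[n] w) w
          ≤ dist (g^[n] w) (g^[n] (g^[t] x₀)) + dist (g^[n] (g^[t] x₀)) (g^[t] x₀)
            + dist (g^[t] x₀) w := dist_triangle4 _ _ _ _
        _ ≤ ε/2 + γ := by linarith
    have := key (ε/2) (by positivity)
    linarith
  have hmul : ∀ (n : ℕ) (α : ℝ), (∀ w : X, dist (g^[n] w) w ≤ α) →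
      ∀ (j : ℕ) (w : X), dist (g^[j * n] w) w ≤ j * α := by
    intro n α h j
    induction j with
    | zero => intro w; simp
    | succ j ih =>
      intro w
      have e : (j + 1) * n = n + j * n := by ring
      rw [e, Function.iterate_add_apply]
      calc dist (g^[n] (g^[j*n] w)) w
          ≤ dist (g^[n] (g^[j*n] w)) (g^[j*n] w) + dist (g^[j*n] w) w := dist_triangle _ _ _
        _ ≤ α + j * α := add_le_add (h _) (ih w)
        _ = ((j + 1 : ℕ) : ℝ) * α := by push_cast; ring
  have hrig : ∀ ε : ℝ, 0 < ε → ∀ N : ℕ, ∃ n : ℕ, N ≤ n ∧ 1 ≤ n ∧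
      ∀ w : X, dist (g^[n] w) w ≤ ε := by
    intro ε hε N
    have hNpos : (0:ℝ) < (N:ℝ) + 1 := by positivity
    obtain ⟨n₁, hn₁, h₁⟩ := hrig1 (ε / ((N:ℝ) + 1)) (by positivity)
    refine ⟨(N + 1) * n₁, ?_, ?_, fun w => ?_⟩
    · calc N ≤ (N + 1) * 1 := by omega
        _ ≤ (N + 1) * n₁ := Nat.mul_le_mul_left _ hn₁
    · have : 0 < (N + 1) * n₁ := Nat.mul_pos (by omega) hn₁
      omega
    · have hb := hmul n₁ (ε / ((N:ℝ) + 1)) h₁ (N + 1) w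
      have e : ((N + 1 : ℕ) : ℝ) * (ε / ((N:ℝ) + 1)) = ε := by
        push_cast
        field_simp
      rw [e] at hb
      exact hb
  -- key lemma: the orbit of x₀ approaches every point in the sup metric
  have hKey : ∀ (z : X) (ε : ℝ), 0 < ε → ∃ k : ℕ, ∀ m : ℕ,
      dist (g^[m] (g^[k] x₀)) (g^[m] z) ≤ ε := by
    intro z ε hε
    obtain ⟨δ, hδ, hmod⟩ := hL1 (ε/4) (by positivity)
    have ha : ∀ i : ℕ, ∃ k : ℕ, dist (g^[k] x₀) z < 1 / ((i:ℝ) + 1) :=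
      fun i => hdense z (1 / ((i:ℝ) + 1)) (by positivity)
    choose a haspec using ha
    obtain ⟨y, hy⟩ := gw_meas hg μ hinv (hBs_closed (ε/4)) (hBs_pos hδ hmod) a
    obtain ⟨j₀, -, hyj₀⟩ := hy 0
    refine ⟨a j₀, fun m => ?_⟩
    have key : ∀ γ : ℝ, 0 < γ → dist (g^[m] (g^[a j₀] x₀)) (g^[m] z) ≤ ε/2 + γ := by
      intro γ hγ
      obtain ⟨θ, hθ, hcont⟩ := Metric.continuousAt_iff.1 (hg.iterate m).continuousAt
        γ hγ
      obtain ⟨N₀, hN₀⟩ := exists_nat_gt (1 / θ)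
      obtain ⟨j, hjN, hyj⟩ := hy N₀
      have hdist_j : dist (g^[a j] x₀) z < θ := by
        have hcast : ((N₀:ℝ)) ≤ (j:ℝ) := Nat.cast_le.2 hjN
        have h1 : (1 : ℝ) / ((j:ℝ) + 1) ≤ 1 / ((N₀:ℝ) + 1) := by
          apply one_div_le_one_div_of_le (by positivity)
          linarith
        have h2 : (1 : ℝ) / ((N₀:ℝ) + 1) < θ := by
          rw [div_lt_iff₀ (by positivity)]
          rw [div_lt_iff₀ hθ] at hN₀
          nlinarith
        linarith [haspec j]
      have h1 : dist (g^[m] (g^[a j] x₀)) (g^[m] z) < γ := hcont hdist_j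
      have h2 : dist (g^[m + a j₀] x₀) (g^[m + a j] x₀) ≤ 2 * (ε/4) :=
        gw_pair g x₀ y (a j₀) (a j) (hBs_shift hyj₀) (hBs_shift hyj) m
      have e1 : g^[m + a j₀] x₀ = g^[m] (g^[a j₀] x₀) := Function.iterate_add_apply g m (a j₀) x₀
      have e2 : g^[m + a j] x₀ = g^[m] (g^[a j] x₀) := Function.iterate_add_apply g m (a j) x₀
      rw [e1, e2] at h2
      calc dist (g^[m] (g^[a j₀] x₀)) (g^[m] z)
          ≤ dist (g^[m] (g^[a j₀] x₀)) (g^[m] (g^[a j] x₀))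
            + dist (g^[m] (g^[a j] x₀)) (g^[m] z) := dist_triangle _ _ _
        _ ≤ ε/2 + γ := by linarith
    have := key (ε/2) (by positivity)
    linarith
  -- minimality
  have hmin : ∀ z : X, closure (Set.range fun n : ℕ => g^[n] z) = Set.univ := by
    intro z
    have hx0cl : x₀ ∈ closure (Set.range fun n : ℕ => g^[n] z) := by
      rw [Metric.mem_closure_iff]
      intro ε hε
      obtain ⟨k, hk⟩ := hKey z (ε/3) (by positivity)
      obtain ⟨n, hnk, hn1, hnr⟩ := hrig (ε/3) (by positivity) k
      refine ⟨g^[n - k] z, ⟨n - k, rfl⟩, ?_⟩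
      have e : g^[n] x₀ = g^[n - k] (g^[k] x₀) := by
        rw [← Function.iterate_add_apply]
        congr 1
        omega
      have h1 : dist (g^[n] x₀) x₀ ≤ ε/3 := hnr x₀
      have h2 : dist (g^[n - k] (g^[k] x₀)) (g^[n - k] z) ≤ ε/3 := hk (n - k)
      rw [dist_comm] at h1
      calc dist x₀ (g^[n - k] z)
          ≤ dist x₀ (g^[n] x₀) + dist (g^[n] x₀) (g^[n - k] z) := dist_triangle _ _ _
        _ ≤ ε/3 + ε/3 := by
            have h2' : dist (g^[n] x₀) (g^[n - k] z) ≤ ε/3 := by rw [e]; exact h2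
            exact add_le_add h1 h2'
        _ < ε := by linarith
    have hinvcl : ∀ u, u ∈ closure (Set.range fun n : ℕ => g^[n] z) →
        g u ∈ closure (Set.range fun n : ℕ => g^[n] z) := by
      intro u hu
      have h1 : g u ∈ g '' closure (Set.range fun n : ℕ => g^[n] z) := ⟨u, hu, rfl⟩
      have h2 := image_closure_subset_closure_image (f := g)
        (s := Set.range fun n : ℕ => g^[n] z) hg h1
      have himg : g '' (Set.range fun n : ℕ => g^[n] z) ⊆ Set.range fun n : ℕ => g^[n] z := by
        rintro v ⟨_, ⟨n, rfl⟩, rfl⟩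
        exact ⟨n + 1, by simpa using (Function.iterate_succ_apply' g n z)⟩
      exact closure_mono himg h2
    have horb : ∀ j : ℕ, g^[j] x₀ ∈ closure (Set.range fun n : ℕ => g^[n] z) := by
      intro j
      induction j with
      | zero => simpa using hx0cl
      | succ j ih =>
        rw [Function.iterate_succ_apply']
        exact hinvcl _ ih
    apply Set.eq_univ_of_univ_subset
    calc Set.univ = closure (Set.range fun n : ℕ => g^[n] x₀) := hx₀.symm
      _ ⊆ closure (closure (Set.range fun n : ℕ => g^[n] z)) :=
          closure_mono (by rintro v ⟨j, rfl⟩; exact horb j)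
      _ = closure (Set.range fun n : ℕ => g^[n] z) := closure_closure
  -- injectivity
  have hinj : Function.Injective g := by
    intro u v huv
    have hiter : ∀ n : ℕ, 1 ≤ n → g^[n] u = g^[n] v := by
      intro n hn
      obtain ⟨m, rfl⟩ : ∃ m, n = m + 1 := ⟨n - 1, by omega⟩
      rw [Function.iterate_succ_apply, Function.iterate_succ_apply, huv]
    have hle : ∀ ε : ℝ, 0 < ε → dist u v ≤ 0 + ε := by
      intro ε hε
      obtain ⟨n, hn1, hnr⟩ := hrig1 (ε/2) (by positivity)
      have h1 := hnr u
      have h2 := hnr v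
      rw [dist_comm] at h1
      calc dist u v ≤ dist u (g^[n] u) + dist (g^[n] u) v := dist_triangle _ _ _
        _ ≤ ε/2 + ε/2 := by
            have h2' : dist (g^[n] u) v ≤ ε/2 := by rw [hiter n hn1]; exact h2
            exact add_le_add h1 h2'
        _ = 0 + ε := by ring
    have : dist u v ≤ 0 := le_of_forall_pos_le_add hle
    exact dist_le_zero.1 this
  -- surjectivity
  have hsurj : Function.Surjective g := by
    intro w
    have hclosed : IsClosed (Set.range g) := (isCompact_range hg).isClosed
    have hmem : w ∈ closure (Set.range g) := by
      rw [Metric.mem_closure_iff]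
      intro ε hε
      obtain ⟨n, hn1, hnr⟩ := hrig1 (ε/2) (by positivity)
      obtain ⟨m, rfl⟩ : ∃ m, n = m + 1 := ⟨n - 1, by omega⟩
      refine ⟨g^[m+1] w, ⟨g^[m] w, (Function.iterate_succ_apply' g m w).symm⟩, ?_⟩
      have := hnr w
      rw [dist_comm]
      linarith
    rw [hclosed.closure_eq] at hmem
    exact hmem
  -- uniform equicontinuity
  have hequi : ∀ ε : ℝ, 0 < ε → ∃ δ : ℝ, 0 < δ ∧ ∀ y y' : X, dist y y' ≤ δ →
      ∀ n : ℕ, dist (g^[n] y) (g^[n] y') ≤ ε := by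
    intro ε hε
    obtain ⟨δ, hδ, hmod⟩ := hL1 (ε/4) (by positivity)
    set S : ℕ → Set X := fun k => (g^[k]) ⁻¹' Metric.ball x₀ (δ/2) with hSdef
    have hSopen : ∀ k, IsOpen (S k) := fun k => Metric.isOpen_ball.preimage (hg.iterate k)
    have hcover : Set.univ ⊆ ⋃ k, S k := by
      intro y _
      have hycl : x₀ ∈ closure (Set.range fun n : ℕ => g^[n] y) := by
        rw [hmin y]; trivial
      obtain ⟨b, ⟨k, rfl⟩, hb⟩ := Metric.mem_closure_iff.1 hycl (δ/2) (by positivity)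
      refine Set.mem_iUnion.2 ⟨k, ?_⟩
      show g^[k] y ∈ Metric.ball x₀ (δ/2)
      rw [Metric.mem_ball, dist_comm]
      exact hb
    obtain ⟨t, ht⟩ := isCompact_univ.elim_finite_subcover S hSopen hcover
    set K := t.sup id with hKdef
    obtain ⟨η, hη, hfin⟩ := gw_unif_fin hg K
      (show (0:ℝ) < min (δ/2) ε from lt_min (by positivity) hε)
    refine ⟨η, hη, fun y y' hyy' n => ?_⟩
    obtain ⟨k, hkt, hyk⟩ : ∃ k ∈ t, y ∈ S k := by
      have := ht (Set.mem_univ y)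
      simpa using this
    have hkK : k ≤ K := Finset.le_sup (f := id) hkt
    rcases le_or_gt n K with hn | hn
    · exact le_trans (hfin y y' hyy' n hn) (min_le_right _ _)
    · obtain ⟨s, rfl⟩ : ∃ s, n = s + k := ⟨n - k, by omega⟩
      have hyball : dist (g^[k] y) x₀ < δ/2 := by
        have : g^[k] y ∈ Metric.ball x₀ (δ/2) := hyk
        rwa [Metric.mem_ball] at this
      have hd1 : dist x₀ (g^[k] y) ≤ δ := by
        rw [dist_comm]; linarith
      have hd2 : dist x₀ (g^[k] y') ≤ δ := by
        have h2 : dist (g^[k] y) (g^[k] y') ≤ min (δ/2) ε := hfin y y' hyy' k hkK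
        have h3 := min_le_left (δ/2) ε
        have h1' : dist x₀ (g^[k] y) < δ/2 := by rw [dist_comm]; exact hyball
        calc dist x₀ (g^[k] y')
            ≤ dist x₀ (g^[k] y) + dist (g^[k] y) (g^[k] y') := dist_triangle _ _ _
          _ ≤ δ := by linarith
      have ha := hmod _ hd1 s
      have hb2 := hmod _ hd2 s
      rw [Function.iterate_add_apply, Function.iterate_add_apply]
      rw [dist_comm] at ha
      calc dist (g^[s] (g^[k] y)) (g^[s] (g^[k] y'))
          ≤ dist (g^[s] (g^[k] y)) (g^[s] x₀) + dist (g^[s] x₀) (g^[s] (g^[k] y')) :=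
            dist_triangle _ _ _
        _ ≤ ε := by linarith
  exact ⟨fun ε hε => by
      obtain ⟨δ, hδ, h⟩ := hequi ε hε
      exact ⟨δ, hδ, h⟩,
    ⟨hinj, hsurj⟩, hmin⟩
end

section
/- If g : X → X is a uniformly rigid homeomorphism of a compact metric space such that the family (gⁿ)_{n∈ℕ} of forward iterates is equicontinuous, then the full family (gⁿ)_{n∈ℤ} of all iterates (including backward iterates) is equicontinuous. -/
private lemma iter_cancel {X : Type*} [TopologicalSpace X] (g : X ≃ₜ X) (m p : ℕ) (h : m ≤ p) (x : X) :
    (⇑g)^[m] ((⇑g.symm)^[p] x) = (⇑g.symm)^[p - m] x := by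
  have hli : Function.LeftInverse (⇑g) (⇑g.symm) := g.apply_symm_apply
  have : (⇑g.symm)^[p] x = (⇑g.symm)^[m] ((⇑g.symm)^[p - m] x) := by
    rw [← Function.iterate_add_apply]
    congr 1; omega
  rw [this, (hli.iterate m) _]


/-- A uniformly rigid homeomorphism of a compact metric space with
equicontinuous forward iterates has equicontinuous full family of iterates
(forward and backward). -/
theorem equicontinuous_all_iterates_of_uniformly_rigid {X : Type*} [MetricSpace X]
    [CompactSpace X] (g : X ≃ₜ X)
    (hrig : ∃ n : ℕ → ℕ, StrictMono n ∧
        TendstoUniformly (fun k => (⇑g)^[n k]) id Filter.atTop)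
    (hfwd : ∀ ε > 0, ∃ δ > 0, ∀ y z : X, dist y z ≤ δ →
        ∀ n : ℕ, dist ((⇑g)^[n] y) ((⇑g)^[n] z) ≤ ε) :
    ∀ ε > 0, ∃ δ > 0, ∀ y z : X, dist y z ≤ δ →
      (∀ n : ℕ, dist ((⇑g)^[n] y) ((⇑g)^[n] z) ≤ ε) ∧
      (∀ n : ℕ, dist ((⇑g.symm)^[n] y) ((⇑g.symm)^[n] z) ≤ ε) := by
  intro ε hε
  obtain ⟨n, hmono, hconv⟩ := hrig
  obtain ⟨δ₁, hδ₁, h1⟩ := hfwd ε hε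
  -- get K such that for k ≥ K, sup_x dist (g^[n k] x) x ≤ δ₁/3
  rw [Metric.tendstoUniformly_iff] at hconv
  obtain ⟨K, hK⟩ := (hconv (δ₁ / 3) (by linarith)).exists_forall_of_atTop
  -- backward iterates also close to id
  have hKsym : ∀ k ≥ K, ∀ x : X, dist ((⇑g.symm)^[n k] x) x ≤ δ₁ / 3 := by
    intro k hk x
    have hli : Function.LeftInverse (⇑g) (⇑g.symm) := g.apply_symm_apply
    have := hK k hk ((⇑g.symm)^[n k] x)
    simp only [id_eq] at this
    rw [(hli.iterate (n k)) x] at this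
    exact this.le
  refine ⟨δ₁ / 3, by linarith, fun y z hyz => ⟨fun m => h1 y z (by linarith) m, ?_⟩⟩
  intro m
  set k := max K m with hk
  have hkK : K ≤ k := le_max_left _ _
  have hmn : m ≤ n k := le_trans (le_max_right K m) (hmono.le_apply)
  have key : dist ((⇑g.symm)^[n k] y) ((⇑g.symm)^[n k] z) ≤ δ₁ :=
    calc dist ((⇑g.symm)^[n k] y) ((⇑g.symm)^[n k] z)
        ≤ dist ((⇑g.symm)^[n k] y) y + dist y z + dist z ((⇑g.symm)^[n k] z) :=
          dist_triangle4 _ _ _ _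
      _ ≤ δ₁ / 3 + δ₁ / 3 + δ₁ / 3 := by
          have := hKsym k hkK y
          have h2 := hKsym k hkK z
          rw [dist_comm] at h2
          gcongr
      _ = δ₁ := by ring
  have := h1 _ _ key (n k - m)
  rwa [iter_cancel g (n k - m) (n k) (by omega) y,
    iter_cancel g (n k - m) (n k) (by omega) z, Nat.sub_sub_self hmn] at this
end

section
/- Let f(θ,ξ) = (θ+ω, f_θ(ξ)) be a continuous quasiperiodically forced map on 𝕋¹ × M with ω irrational, and let 𝒜 be a compact f-invariant set that is pinched (some fiber 𝒜_θ is a single point). Then the set of θ ∈ 𝕋¹ at which 𝒜 is pinched is residual in 𝕋¹. -/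
/-!
Invariance makes the fiber over `θ + ω` the image under `F θ` of the fiber over `θ`, so all
fibers along the forward orbit of a pinched point are singletons, and this orbit is dense.
Compactness of `𝒜` makes its projection to the circle closed, hence the whole circle, and makes each
`{θ | diam 𝒜_θ < 1/(n+1)}` open; these sets contain the orbit, so they are dense open, and every
point of their intersection has a singleton fiber.
-/

open Set

section SkewProduct

variable {G M : Type*} [AddRightCancelMonoid G] {ω : G} {F : G → M → M} {f : G × M → G × M}
  {A : Set (G × M)}

theorem fiber_add_eq_image_of_skewProduct (hf : ∀ p, f p = (p.1 + ω, F p.1 p.2))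
    (hinv : f '' A = A) (θ : G) :
    Prod.mk (θ + ω) ⁻¹' A = F θ '' (Prod.mk θ ⁻¹' A) := by
  ext ξ
  constructor
  · intro h
    rw [mem_preimage, ← hinv] at h
    obtain ⟨⟨θ', η⟩, hη, hfη⟩ := h
    rw [hf, Prod.mk.injEq, add_left_inj] at hfη
    obtain ⟨rfl, rfl⟩ := hfη
    exact mem_image_of_mem _ hη
  · rintro ⟨η, hη, rfl⟩
    rw [mem_preimage, ← hinv]
    exact ⟨(θ, η), hη, hf _⟩

theorem fiber_add_nsmul_eq_singleton_of_skewProduct (hf : ∀ p, f p = (p.1 + ω, F p.1 p.2))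
    (hinv : f '' A = A) {θ : G} {ξ : M} (hθ : Prod.mk θ ⁻¹' A = {ξ}) (n : ℕ) :
    ∃ η, Prod.mk (θ + n • ω) ⁻¹' A = {η} := by
  induction n with
  | zero => exact ⟨ξ, by rwa [zero_nsmul, add_zero]⟩
  | succ n ih =>
    obtain ⟨η, hη⟩ := ih
    refine ⟨F (θ + n • ω) η, ?_⟩
    rw [succ_nsmul, ← add_assoc, fiber_add_eq_image_of_skewProduct hf hinv, hη, image_singleton]

end SkewProduct

section Fibers

variable {X M : Type*} [TopologicalSpace X] [MetricSpace M] {A : Set (X × M)}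

theorem IsCompact.isOpen_setOf_fiber_dist_lt [T2Space X] (hA : IsCompact A) (ε : ℝ) :
    IsOpen {x | ∀ ξ ∈ Prod.mk x ⁻¹' A, ∀ ξ' ∈ Prod.mk x ⁻¹' A, dist ξ ξ' < ε} := by
  set K := A ×ˢ A ∩ {pq : (X × M) × (X × M) | pq.1.1 = pq.2.1 ∧ ε ≤ dist pq.1.2 pq.2.2}
  have hK : IsCompact K := (hA.prod hA).inter_right <|
    (isClosed_eq continuous_fst.fst continuous_snd.fst).inter
      (isClosed_le continuous_const (continuous_fst.snd.dist continuous_snd.snd))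
  have hcompl : {x | ∀ ξ ∈ Prod.mk x ⁻¹' A, ∀ ξ' ∈ Prod.mk x ⁻¹' A, dist ξ ξ' < ε}ᶜ =
      (fun pq => pq.1.1) '' K := by
    ext x
    simp only [mem_compl_iff, mem_ofPred_eq, not_forall, not_lt, exists_prop, mem_image]
    constructor
    · rintro ⟨ξ, hξ, ξ', hξ', hε⟩
      exact ⟨((x, ξ), (x, ξ')), ⟨⟨hξ, hξ'⟩, rfl, hε⟩, rfl⟩
    · rintro ⟨⟨⟨x, ξ⟩, ⟨x', ξ'⟩⟩, ⟨⟨hξ, hξ'⟩, hx, hε⟩, rfl⟩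
      exact ⟨ξ, hξ, ξ', hx ▸ hξ', hε⟩
  rw [← isClosed_compl_iff, hcompl]
  exact (hK.image (by fun_prop)).isClosed

theorem IsCompact.fiber_nonempty_of_dense [T2Space X] (hA : IsCompact A) {D : Set X}
    (hD : Dense D) (hDA : ∀ x ∈ D, (Prod.mk x ⁻¹' A).Nonempty) (x : X) :
    (Prod.mk x ⁻¹' A).Nonempty := by
  have hproj : Prod.fst '' A = univ := by
    refine eq_univ_of_univ_subset ?_
    rw [← hD.closure_eq, (hA.image continuous_fst).isClosed.closure_subset_iff]
    intro y hy
    obtain ⟨ξ, hξ⟩ := hDA y hy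
    exact ⟨(y, ξ), hξ, rfl⟩
  obtain ⟨⟨y, ξ⟩, hξ, rfl⟩ := hproj.symm ▸ mem_univ x
  exact ⟨ξ, hξ⟩

theorem IsCompact.residual_setOf_fiber_eq_singleton [T2Space X] (hA : IsCompact A) {D : Set X}
    (hD : Dense D) (hDA : ∀ x ∈ D, ∃ ξ, Prod.mk x ⁻¹' A = {ξ}) :
    {x | ∃ ξ, Prod.mk x ⁻¹' A = {ξ}} ∈ residual X := by
  set U : ℕ → Set X := fun n =>
    {x | ∀ ξ ∈ Prod.mk x ⁻¹' A, ∀ ξ' ∈ Prod.mk x ⁻¹' A, dist ξ ξ' < 1 / (n + 1)}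
  have hU : ∀ n, U n ∈ residual X := fun n => by
    refine residual_of_dense_open (hA.isOpen_setOf_fiber_dist_lt _) (hD.mono fun x hx => ?_)
    obtain ⟨ξ, hξ⟩ := hDA x hx
    intro η hη η' hη'
    rw [hξ] at hη hη'
    rw [hη, hη', dist_self]
    positivity
  filter_upwards [countable_iInter_mem.mpr hU] with x hx
  rw [exists_eq_singleton_iff_nonempty_subsingleton]
  refine ⟨hA.fiber_nonempty_of_dense hD (fun y hy => ?_) x, fun ξ hξ ξ' hξ' => ?_⟩
  · obtain ⟨ξ, hξ⟩ := hDA y hy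
    exact hξ ▸ singleton_nonempty ξ
  · refine dist_le_zero.mp (le_of_forall_gt fun ε hε => ?_)
    obtain ⟨n, hn⟩ := exists_nat_one_div_lt hε
    exact (mem_iInter.mp hx n ξ hξ ξ' hξ').trans hn

end Fibers

theorem AddCircle.denseRange_add_nsmul_coe {p ω : ℝ} [Fact (0 < p)] (hω : Irrational (ω / p))
    (θ : AddCircle p) : DenseRange (fun n : ℕ => θ + n • (ω : AddCircle p)) :=
  (add_left_surjective θ).denseRange.comp
    (denseRange_zsmul_iff_nsmul.mp (denseRange_zsmul_coe_iff.mpr hω)) (continuous_const_add θ)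

theorem pinched_set_residual_general {M : Type*} [MetricSpace M]
    (ω : ℝ) (hω : Irrational ω)
    (F : AddCircle (1 : ℝ) → M → M)
    (f : AddCircle (1 : ℝ) × M → AddCircle (1 : ℝ) × M)
    (hf : ∀ p, f p = (p.1 + (ω : AddCircle (1 : ℝ)), F p.1 p.2))
    (A : Set (AddCircle (1 : ℝ) × M)) (hA : IsCompact A)
    (hinv : f '' A = A)
    (hpinch : ∃ θ : AddCircle (1 : ℝ), ∃ ξ : M, {ξ' : M | (θ, ξ') ∈ A} = {ξ}) :
    {θ : AddCircle (1 : ℝ) | ∃ ξ : M, {ξ' : M | (θ, ξ') ∈ A} = {ξ}} ∈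
      residual (AddCircle (1 : ℝ)) := by
  obtain ⟨θ₀, ξ₀, hθ₀⟩ := hpinch
  have horbit : DenseRange (fun n : ℕ => θ₀ + n • (ω : AddCircle (1 : ℝ))) :=
    AddCircle.denseRange_add_nsmul_coe (by rwa [div_one]) θ₀
  refine hA.residual_setOf_fiber_eq_singleton horbit ?_
  rintro _ ⟨n, rfl⟩
  exact fiber_add_nsmul_eq_singleton_of_skewProduct hf hinv hθ₀ n

/-- For a continuous quasiperiodically forced map over an irrational
rotation, the set of `θ` at which a compact invariant pinched set `𝒜` is pinched
is residual in the circle. -/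
theorem pinched_set_residual {M : Type*} [MetricSpace M]
    (ω : ℝ) (hω : Irrational ω)
    (F : AddCircle (1 : ℝ) → M → M)
    (f : AddCircle (1 : ℝ) × M → AddCircle (1 : ℝ) × M)
    (hf : ∀ p, f p = (p.1 + (ω : AddCircle (1 : ℝ)), F p.1 p.2))
    (hcont : Continuous f)
    (A : Set (AddCircle (1 : ℝ) × M)) (hA : IsCompact A)
    (hinv : f '' A = A)
    (hpinch : ∃ θ : AddCircle (1 : ℝ), ∃ ξ : M, {ξ' : M | (θ, ξ') ∈ A} = {ξ}) :
    {θ : AddCircle (1 : ℝ) | ∃ ξ : M, {ξ' : M | (θ, ξ') ∈ A} = {ξ}} ∈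
      residual (AddCircle (1 : ℝ)) :=
  pinched_set_residual_general ω hω F f hf A hA hinv hpinch
end

section
/- Let f be a continuous quasiperiodically forced map over an irrational rotation, and 𝒜 a compact invariant set without isolated points such that f|_𝒜 is transitive and 𝒜 supports a finite f-invariant measure with full support in 𝒜. If 𝒜 is pinched, then either f restricted to 𝒜 has sensitive dependence on initial conditions, or 𝒜 is the graph of a continuous function ψ : 𝕋¹ → M. -/
/-!
If `f|𝒜` is not sensitive, then for every `ε` some open set meeting `𝒜` has all its orbits
`ε`-close forever; pulling it back along the dense orbit of a transitive point `x₀` makes `x₀` an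
equicontinuity point. Full support of the invariant measure makes the return times of a ball
around `x₀` to itself syndetic (otherwise infinitely many of its preimages would be disjoint), so
`x₀` is uniformly recurrent and lies in the orbit closure of the pinched point `p₀`, which is
therefore an equicontinuity point as well. By compactness, points of `𝒜` over base points near
`θ₀` are close to `p₀`; pulling two points of one fibre back by a common time to such a base point
shows that they are `ε`-close for every `ε`. Hence every fibre is a point, and a compact graph is
the graph of a continuous map.
-/

open Filter Set Topology Function MeasureTheory

def IsSyndetic (R : Set ℕ) : Prop :=
  ∃ L, ∀ a, ∃ n ∈ R, a < n ∧ n ≤ a + L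

lemma IsSyndetic.mono {R S : Set ℕ} (h : IsSyndetic R) (hRS : R ⊆ S) : IsSyndetic S :=
  let ⟨L, hL⟩ := h
  ⟨L, fun a => let ⟨n, hn, hwin⟩ := hL a; ⟨n, hRS hn, hwin⟩⟩

lemma exists_strictMono_sub_notMem_of_not_isSyndetic {R : Set ℕ} (hR : ¬IsSyndetic R) :
    ∃ t : ℕ → ℕ, StrictMono t ∧ ∀ i j, i < j → t j - t i ∉ R := by
  simp only [IsSyndetic, not_exists, not_forall, not_and, not_le] at hR
  choose gap hgap using hR
  -- `R` misses the window `(gap L, gap L + L]`; each new term is the right end of the window of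
  -- length `t k + 1`, which then contains its difference with every earlier term.
  let t : ℕ → ℕ := fun k => Nat.rec 0 (fun _ s => gap (s + 1) + (s + 1)) k
  have ht_succ : ∀ k, t (k + 1) = gap (t k + 1) + (t k + 1) := fun _ => rfl
  have ht : StrictMono t := strictMono_nat_of_lt_succ fun k => by rw [ht_succ]; omega
  refine ⟨t, ht, fun i j hij hR => ?_⟩
  obtain ⟨k, rfl⟩ : ∃ k, j = k + 1 := ⟨j - 1, by omega⟩
  have hik : t i ≤ t k := ht.monotone (Nat.lt_succ_iff.1 hij)
  have hwin := hgap (t k + 1) _ hR (by rw [ht_succ]; omega)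
  rw [ht_succ] at hwin
  omega

lemma isSyndetic_measure_inter_preimage_iterate_ne_zero {α : Type*} [MeasurableSpace α]
    {μ : Measure α} [IsFiniteMeasure μ] {f : α → α} (hf : MeasurePreserving f μ μ)
    {B : Set α} (hB : MeasurableSet B) (hB0 : μ B ≠ 0) :
    IsSyndetic {n | μ (B ∩ f^[n] ⁻¹' B) ≠ 0} := by
  by_contra hR
  obtain ⟨t, ht, hgap⟩ := exists_strictMono_sub_notMem_of_not_isSyndetic hR
  have hmeas : ∀ n, NullMeasurableSet (f^[n] ⁻¹' B) μ :=
    fun n => (hB.preimage (hf.iterate n).measurable).nullMeasurableSet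
  have hdisj : Pairwise (AEDisjoint μ on fun i => f^[t i] ⁻¹' B) := by
    refine (Std.Symm.pairwise_on _).2 fun i j hij => ?_
    have hsplit : f^[t j] ⁻¹' B = f^[t i] ⁻¹' (f^[t j - t i] ⁻¹' B) := by
      rw [← preimage_comp, ← iterate_add, Nat.sub_add_cancel (ht hij).le]
    rw [AEDisjoint, hsplit, ← preimage_inter,
      (hf.iterate (t i)).measure_preimage (hB.nullMeasurableSet.inter (hmeas _))]
    simpa using hgap i j hij
  have hunion : μ (⋃ i, f^[t i] ⁻¹' B) = ⊤ := by
    rw [measure_iUnion₀ hdisj fun i => hmeas (t i)]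
    simp only [(hf.iterate _).measure_preimage hB.nullMeasurableSet]
    exact ENNReal.tsum_const_eq_top_of_ne_zero hB0
  exact measure_ne_top μ _ hunion

section Stability

variable {X : Type*} [MetricSpace X] {f : X → X} {A : Set X} {ε : ℝ}

def HasSensitiveDependenceOn (f : X → X) (A : Set X) : Prop :=
  ∃ ε > 0, ∀ x ∈ A, ∀ δ > 0, ∃ y ∈ A, ∃ z ∈ A,
    dist x y ≤ δ ∧ dist x z ≤ δ ∧ ∃ n : ℕ, ε ≤ dist (f^[n] y) (f^[n] z)

def IsEpsStableAt (f : X → X) (A : Set X) (ε : ℝ) (x : X) : Prop :=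
  ∀ᶠ p in 𝓝 x ×ˢ 𝓝 x, p.1 ∈ A → p.2 ∈ A → ∀ n, dist (f^[n] p.1) (f^[n] p.2) ≤ ε

def IsEquicontinuityPoint (f : X → X) (A : Set X) (x : X) : Prop :=
  ∀ ε > 0, IsEpsStableAt f A ε x

def IsUniformlyRecurrent (f : X → X) (x : X) : Prop :=
  ∀ U ∈ 𝓝 x, IsSyndetic {n | f^[n] x ∈ U}

lemma isEpsStableAt_iff {x : X} : IsEpsStableAt f A ε x ↔
    ∃ V ∈ 𝓝 x, ∀ u ∈ V, ∀ v ∈ V, u ∈ A → v ∈ A → ∀ n, dist (f^[n] u) (f^[n] v) ≤ ε :=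
  eventually_prod_self_iff (r := fun u v => u ∈ A → v ∈ A → ∀ n, dist (f^[n] u) (f^[n] v) ≤ ε)

lemma isOpen_setOf_isEpsStableAt : IsOpen {x | IsEpsStableAt f A ε x} := by
  simp only [IsEpsStableAt, ← nhds_prod_eq]
  exact isOpen_setOfPred_eventually_nhds.preimage (continuous_id.prodMk continuous_id)

lemma exists_isEpsStableAt_of_not_hasSensitiveDependenceOn
    (h : ¬HasSensitiveDependenceOn f A) (hε : 0 < ε) : ∃ x ∈ A, IsEpsStableAt f A ε x := by
  simp only [HasSensitiveDependenceOn] at h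
  push Not at h
  obtain ⟨x, hx, δ, hδ, hclose⟩ := h ε hε
  refine ⟨x, hx, isEpsStableAt_iff.2 ⟨_, Metric.closedBall_mem_nhds x hδ, ?_⟩⟩
  intro y hy z hz hyA hzA n
  exact (hclose y hyA z hzA (dist_comm x y ▸ hy) (dist_comm x z ▸ hz) n).le

lemma IsEpsStableAt.of_iterate (hf : Continuous f) (hA : MapsTo f A A) (hε : 0 < ε)
    {x : X} {m : ℕ} (h : IsEpsStableAt f A ε (f^[m] x)) : IsEpsStableAt f A ε x := by
  have hlate : ∀ᶠ p in 𝓝 x ×ˢ 𝓝 x, p.1 ∈ A → p.2 ∈ A →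
      ∀ n, dist (f^[n + m] p.1) (f^[n + m] p.2) ≤ ε := by
    filter_upwards [((hf.iterate m).tendsto x).prodMap ((hf.iterate m).tendsto x) |>.eventually h]
      with p hp h1 h2 n
    simpa only [iterate_add_apply, Prod.map_fst, Prod.map_snd] using
      hp (hA.iterate m h1) (hA.iterate m h2) n
  have hearly : ∀ᶠ p in 𝓝 x ×ˢ 𝓝 x, ∀ n ∈ Iio m, dist (f^[n] p.1) (f^[n] p.2) < ε := by
    refine (finite_Iio m).eventually_all.2 fun n _ => ?_
    rw [← nhds_prod_eq]
    have hcont : Continuous fun p : X × X => dist (f^[n] p.1) (f^[n] p.2) := by fun_prop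
    exact hcont.continuousAt.eventually_lt continuousAt_const (by simpa using hε)
  filter_upwards [hlate, hearly] with p hlate hearly h1 h2 n
  rcases lt_or_ge n m with hn | hn
  · exact (hearly n hn).le
  · obtain ⟨k, rfl⟩ := Nat.exists_eq_add_of_le' hn
    exact hlate h1 h2 k

lemma IsEpsStableAt.of_mem_closure_orbit (hf : Continuous f) (hA : MapsTo f A A) (hε : 0 < ε)
    {x y : X} (hy : IsEpsStableAt f A ε y) (hyx : y ∈ closure (range fun n => f^[n] x)) :
    IsEpsStableAt f A ε x := by
  obtain ⟨_, hm, m, rfl⟩ := mem_closure_iff.1 hyx _ isOpen_setOf_isEpsStableAt hy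
  exact IsEpsStableAt.of_iterate hf hA hε hm

lemma isEquicontinuityPoint_of_not_hasSensitiveDependenceOn (hf : Continuous f)
    (hA : MapsTo f A A) (hsens : ¬HasSensitiveDependenceOn f A) {x : X}
    (hx : A ⊆ closure (range fun n => f^[n] x)) : IsEquicontinuityPoint f A x := fun _ hε =>
  let ⟨_, hyA, hy⟩ := exists_isEpsStableAt_of_not_hasSensitiveDependenceOn hsens hε
  hy.of_mem_closure_orbit hf hA hε (hx hyA)

lemma IsEquicontinuityPoint.isUniformlyRecurrent [MeasurableSpace X] [OpensMeasurableSpace X]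
    {μ : Measure X} [IsFiniteMeasure μ] (hf : MeasurePreserving f μ μ) (hμA : μ Aᶜ = 0)
    {x : X} (hxA : x ∈ A) (hxμ : x ∈ μ.support) (hx : IsEquicontinuityPoint f A x) :
    IsUniformlyRecurrent f x := by
  intro U hU
  obtain ⟨ε, hε, hεU⟩ := Metric.mem_nhds_iff.1 hU
  obtain ⟨V, hV, hVstable⟩ := isEpsStableAt_iff.1 (hx (ε / 2) (half_pos hε))
  obtain ⟨δ, hδ, hδV⟩ := Metric.mem_nhds_iff.1 hV
  set B := Metric.ball x (min δ (ε / 2))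
  have hB0 : μ B ≠ 0 :=
    ((Measure.mem_support_iff_forall x).1 hxμ B (Metric.ball_mem_nhds x (by positivity))).ne'
  refine (isSyndetic_measure_inter_preimage_iterate_ne_zero hf measurableSet_ball hB0).mono
    fun n hn => hεU ?_
  obtain ⟨z, ⟨hzB, hnzB⟩, hzA⟩ : (B ∩ f^[n] ⁻¹' B ∩ A).Nonempty :=
    nonempty_of_measure_ne_zero (by rwa [measure_inter_conull hμA])
  have hBV : B ⊆ V := (Metric.ball_subset_ball (min_le_left _ _)).trans hδV
  have hxz := hVstable x (hBV (Metric.mem_ball_self (by positivity))) z (hBV hzB) hxA hzA n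
  have hzx : dist (f^[n] z) x < ε / 2 := (Metric.mem_ball.1 hnzB).trans_le (min_le_right _ _)
  calc dist (f^[n] x) x ≤ dist (f^[n] x) (f^[n] z) + dist (f^[n] z) x := dist_triangle _ _ _
    _ < ε / 2 + ε / 2 := add_lt_add_of_le_of_lt hxz hzx
    _ = ε := add_halves ε

lemma IsUniformlyRecurrent.mem_closure_orbit (hf : Continuous f) {x p : X}
    (hx : IsUniformlyRecurrent f x) (hp : p ∈ closure (range fun n => f^[n] x)) :
    x ∈ closure (range fun n => f^[n] p) := by
  refine Metric.mem_closure_iff.2 fun ε hε => ?_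
  obtain ⟨L, hL⟩ := hx _ (Metric.ball_mem_nhds x (half_pos hε))
  have hnear : ∀ᶠ u in 𝓝 p, ∀ i ∈ Iic L, dist (f^[i] u) (f^[i] p) < ε / 2 :=
    (finite_Iic L).eventually_all.2 fun i _ =>
      (hf.iterate i).continuousAt.eventually (Metric.ball_mem_nhds _ (half_pos hε))
  obtain ⟨_, hm, m, rfl⟩ := mem_closure_iff_nhds.1 hp _ hnear
  obtain ⟨n, hn, hmn, hnL⟩ := hL m
  have hpx := hm (n - m) (by simp only [mem_Iic]; omega)
  rw [← iterate_add_apply, Nat.sub_add_cancel hmn.le] at hpx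
  refine ⟨f^[n - m] p, ⟨n - m, rfl⟩, ?_⟩
  calc dist x (f^[n - m] p) ≤ dist x (f^[n] x) + dist (f^[n] x) (f^[n - m] p) :=
        dist_triangle _ _ _
    _ < ε / 2 + ε / 2 := add_lt_add (by rw [dist_comm]; exact hn) hpx
    _ = ε := add_halves ε

end Stability

lemma denseRange_nsmul_of_denseRange_zsmul {G : Type*} [SeminormedAddCommGroup G]
    [CompactSpace G] {a : G} (ha : DenseRange fun k : ℤ => k • a) :
    DenseRange fun n : ℕ => n • a := by
  -- By compactness `n • a` returns near `0` at arbitrarily late times `n`; adding such an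
  -- `n • a` to `k • a` turns a negative multiple `k` into a nonnegative one.
  have hrec : ∀ ε > 0, ∀ N : ℕ, ∃ n ≥ N, ‖n • a‖ < ε := by
    intro ε hε N
    obtain ⟨y, -, φ, hφ, hlim⟩ := isCompact_univ.tendsto_subseq fun n : ℕ => mem_univ (n • a)
    obtain ⟨K, hK⟩ := Metric.cauchySeq_iff'.1 hlim.cauchySeq ε hε
    have hle : φ K + N ≤ φ (N + K) := by simpa [add_comm] using hφ.add_le_nat N K
    refine ⟨φ (N + K) - φ K, by omega, ?_⟩
    rw [sub_nsmul a (by omega), ← sub_eq_add_neg, ← dist_eq_norm]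
    exact hK (N + K) (by omega)
  refine Metric.denseRange_iff.2 fun x ε hε => ?_
  obtain ⟨k, hk⟩ := Metric.denseRange_iff.1 ha x (ε / 2) (half_pos hε)
  obtain ⟨n, hn, hna⟩ := hrec (ε / 2) (half_pos hε) k.natAbs
  have hsum : (n + k).toNat • a = k • a + n • a := by
    rw [← natCast_zsmul, Int.toNat_of_nonneg (by omega), add_zsmul, natCast_zsmul, add_comm]
  refine ⟨(n + k).toNat, ?_⟩
  rw [hsum]
  calc dist x (k • a + n • a) ≤ dist x (k • a) + dist (k • a) (k • a + n • a) :=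
        dist_triangle _ _ _
    _ < ε / 2 + ε / 2 := by rw [dist_self_add_right]; exact add_lt_add hk hna
    _ = ε := add_halves ε

lemma denseRange_nsmul_coe_of_irrational {ω : ℝ} (hω : Irrational ω) :
    DenseRange fun n : ℕ => n • (ω : AddCircle (1 : ℝ)) :=
  denseRange_nsmul_of_denseRange_zsmul (AddCircle.denseRange_zsmul_coe_iff.2 (by rwa [div_one]))

lemma IsCompact.eventually_fiber_subset {X Y : Type*} [TopologicalSpace X] [T2Space X]
    [TopologicalSpace Y] {A U : Set (X × Y)} (hA : IsCompact A) (hU : IsOpen U) {x : X}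
    (hx : ∀ y, (x, y) ∈ A → (x, y) ∈ U) : ∀ᶠ x' in 𝓝 x, ∀ y, (x', y) ∈ A → (x', y) ∈ U := by
  have hK : IsClosed (Prod.fst '' (A \ U)) := ((hA.diff hU).image continuous_fst).isClosed
  have hxK : x ∉ Prod.fst '' (A \ U) := by
    rintro ⟨⟨_, y⟩, ⟨hyA, hyU⟩, rfl⟩
    exact hyU (hx y hyA)
  filter_upwards [hK.isOpen_compl.mem_nhds hxK] with x' hx' y hy
  by_contra hyU
  exact hx' ⟨(x', y), ⟨hy, hyU⟩, rfl⟩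

lemma exists_continuous_eq_graph_of_isCompact {X Y : Type*} [TopologicalSpace X] [T2Space X]
    [TopologicalSpace Y] {A : Set (X × Y)} (hA : IsCompact A) (hne : ∀ x, ∃ y, (x, y) ∈ A)
    (hsub : ∀ x, {y | (x, y) ∈ A}.Subsingleton) :
    ∃ ψ : X → Y, Continuous ψ ∧ A = {p | p.2 = ψ p.1} := by
  choose ψ hψ using hne
  have hgraph : A = {p | p.2 = ψ p.1} := by
    ext ⟨x, y⟩
    refine ⟨fun h => hsub x h (hψ x), fun h => ?_⟩
    obtain rfl : y = ψ x := h
    exact hψ x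
  refine ⟨ψ, continuous_iff_isClosed.2 fun C hC => ?_, hgraph⟩
  have hpre : ψ ⁻¹' C = Prod.fst '' (A ∩ Prod.snd ⁻¹' C) := by
    ext x
    refine ⟨fun hx => ⟨(x, ψ x), ⟨hψ x, hx⟩, rfl⟩, ?_⟩
    rintro ⟨⟨x, y⟩, ⟨hxy, hy⟩, rfl⟩
    rw [hgraph] at hxy
    obtain rfl : y = ψ x := hxy
    exact hy
  rw [hpre]
  exact ((hA.inter_right (hC.preimage continuous_snd)).image continuous_fst).isClosed

section SkewProduct

variable {G M : Type*} {g : G} {F : G → M → M} {f : G × M → G × M}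

lemma fst_iterate_of_skewProduct [AddMonoid G] (hf : ∀ p, f p = (p.1 + g, F p.1 p.2)) (n : ℕ)
    (p : G × M) :
    (f^[n] p).1 = p.1 + n • g := by
  induction n with
  | zero => simp
  | succ n ih => rw [iterate_succ_apply', hf, ih, succ_nsmul, add_assoc]

lemma exists_mem_fiber_of_skewProduct [AddCommGroup G] [TopologicalSpace G] [T2Space G]
    [ContinuousAdd G] [TopologicalSpace M] {A : Set (G × M)}
    (hf : ∀ p, f p = (p.1 + g, F p.1 p.2)) (hA : IsCompact A) (hmaps : MapsTo f A A)
    (hg : DenseRange fun n : ℕ => n • g)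
    {p : G × M} (hp : p ∈ A) (θ : G) : ∃ ξ, (θ, ξ) ∈ A := by
  have horbit : DenseRange fun n : ℕ => p.1 + n • g :=
    (add_left_surjective p.1).denseRange.comp hg (continuous_const_add p.1)
  have hsub : range (fun n : ℕ => p.1 + n • g) ⊆ Prod.fst '' A := by
    rintro _ ⟨n, rfl⟩
    exact ⟨f^[n] p, hmaps.iterate n hp, fst_iterate_of_skewProduct hf n p⟩
  obtain ⟨q, hq, rfl⟩ := (hA.image continuous_fst).isClosed.closure_subset_iff.2 hsub (horbit θ)
  exact ⟨q.2, hq⟩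

lemma fiber_subsingleton_of_pinched [AddCommGroup G] [MetricSpace G] [ContinuousAdd G]
    [MetricSpace M] {A : Set (G × M)} (hf : ∀ p, f p = (p.1 + g, F p.1 p.2)) (hA : IsCompact A)
    (hsurj : SurjOn f A A) (hg : DenseRange fun n : ℕ => n • -g) {θ₀ : G} {ξ₀ : M}
    (hpinch : {ξ | (θ₀, ξ) ∈ A} = {ξ₀}) (hstable : IsEquicontinuityPoint f A (θ₀, ξ₀))
    (θ : G) : {ξ | (θ, ξ) ∈ A}.Subsingleton := by
  intro a ha b hb
  refine eq_of_forall_dist_le fun ε hε => ?_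
  obtain ⟨V, hV, hVstable⟩ := isEpsStableAt_iff.1 (hstable ε hε)
  obtain ⟨U, hUV, hUo, hU⟩ := mem_nhds_iff.1 hV
  have hslab := hA.eventually_fiber_subset hUo (x := θ₀) fun ξ hξ => by
    obtain rfl : ξ = ξ₀ := (Set.ext_iff.1 hpinch ξ).1 hξ
    exact hU
  have hback : DenseRange fun n : ℕ => θ + n • -g :=
    (add_left_surjective θ).denseRange.comp hg (continuous_const_add θ)
  obtain ⟨_, hθ', n, rfl⟩ := mem_closure_iff_nhds.1 (hback θ₀) _ hslab
  have hpull : ∀ ξ, (θ, ξ) ∈ A → ∃ q ∈ A ∩ U, f^[n] q = (θ, ξ) := by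
    intro ξ hξ
    obtain ⟨q, hqA, hq⟩ := hsurj.iterate n hξ
    have hq1 : q.1 = θ + n • -g := by
      rw [smul_neg, ← sub_eq_add_neg, eq_sub_iff_add_eq, ← fst_iterate_of_skewProduct hf, hq]
    have hqU : (θ + n • -g, q.2) ∈ A → (θ + n • -g, q.2) ∈ U := hθ' q.2
    rw [← hq1, Prod.mk.eta] at hqU
    exact ⟨q, ⟨hqA, hqU hqA⟩, hq⟩
  obtain ⟨qa, ⟨hqaA, hqaU⟩, hqa⟩ := hpull a ha
  obtain ⟨qb, ⟨hqbA, hqbU⟩, hqb⟩ := hpull b hb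
  have hclose := hVstable qa (hUV hqaU) qb (hUV hqbU) hqaA hqbA n
  rw [hqa, hqb, Prod.dist_eq] at hclose
  exact (le_max_right _ _).trans hclose

end SkewProduct

theorem pinched_dichotomy_general {M : Type*} [MetricSpace M] [MeasurableSpace M] [BorelSpace M]
    (ω : ℝ) (hω : Irrational ω)
    (F : AddCircle (1 : ℝ) → M → M)
    (f : AddCircle (1 : ℝ) × M → AddCircle (1 : ℝ) × M)
    (hf : ∀ p, f p = (p.1 + (ω : AddCircle (1 : ℝ)), F p.1 p.2))
    (hcont : Continuous f)
    (A : Set (AddCircle (1 : ℝ) × M)) (hA : IsCompact A) (hinv : f '' A = A)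
    (htrans : ∃ x ∈ A, A ⊆ closure (Set.range fun n : ℕ => f^[n] x))
    (μ : Measure (AddCircle (1 : ℝ) × M)) [IsFiniteMeasure μ]
    (hμinv : ∀ s, MeasurableSet s → μ (f ⁻¹' s) = μ s)
    (hμA : μ Aᶜ = 0)
    (hμfull : ∀ U : Set (AddCircle (1 : ℝ) × M), IsOpen U → (U ∩ A).Nonempty → 0 < μ U)
    (hpinch : ∃ θ : AddCircle (1 : ℝ), ∃ ξ : M, {ξ' : M | (θ, ξ') ∈ A} = {ξ}) :
    (∃ ε > 0, ∀ x ∈ A, ∀ δ > 0, ∃ y ∈ A, ∃ z ∈ A,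
        dist x y ≤ δ ∧ dist x z ≤ δ ∧ ∃ n : ℕ, ε ≤ dist (f^[n] y) (f^[n] z)) ∨
    (∃ ψ : AddCircle (1 : ℝ) → M, Continuous ψ ∧
        A = {p : AddCircle (1 : ℝ) × M | p.2 = ψ p.1}) := by
  show HasSensitiveDependenceOn f A ∨ _
  refine or_iff_not_imp_left.2 fun hsens => ?_
  obtain ⟨x₀, hx₀A, hx₀⟩ := htrans
  obtain ⟨θ₀, ξ₀, hfib⟩ := hpinch
  have hp₀A : (θ₀, ξ₀) ∈ A := (Set.ext_iff.1 hfib ξ₀).2 rfl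
  have hmaps : MapsTo f A A := mapsTo_iff_image_subset.2 hinv.subset
  have hsurj : SurjOn f A A := hinv.symm.subset
  have hμf : MeasurePreserving f μ μ := ⟨hcont.measurable, Measure.ext fun s hs => by
    rw [Measure.map_apply hcont.measurable hs, hμinv s hs]⟩
  have hx₀μ : x₀ ∈ μ.support := (Measure.mem_support_iff_forall x₀).2 fun U hU =>
    (hμfull _ isOpen_interior ⟨x₀, mem_interior_iff_mem_nhds.2 hU, hx₀A⟩).trans_le
      (measure_mono interior_subset)
  have hx₀stable := isEquicontinuityPoint_of_not_hasSensitiveDependenceOn hcont hmaps hsens hx₀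
  have hrec := hx₀stable.isUniformlyRecurrent hμf hμA hx₀A hx₀μ
  have hp₀stable : IsEquicontinuityPoint f A (θ₀, ξ₀) := fun ε hε =>
    (hx₀stable ε hε).of_mem_closure_orbit hcont hmaps hε (hrec.mem_closure_orbit hcont (hx₀ hp₀A))
  refine exists_continuous_eq_graph_of_isCompact hA
    (exists_mem_fiber_of_skewProduct hf hA hmaps (denseRange_nsmul_coe_of_irrational hω) hp₀A)
    (fiber_subsingleton_of_pinched hf hA hsurj ?_ hfib hp₀stable)
  simpa only [AddCircle.coe_neg] using denseRange_nsmul_coe_of_irrational hω.neg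

/-- For a pinched compact invariant set `𝒜` of a quasiperiodically
forced map over an irrational rotation (no isolated points, transitive, supporting a
fully-supported finite invariant measure): either `f|𝒜` has sensitive dependence on
initial conditions or `𝒜` is the graph of a continuous function. -/
theorem pinched_dichotomy {M : Type*} [MetricSpace M] [MeasurableSpace M] [BorelSpace M]
    (ω : ℝ) (hω : Irrational ω)
    (F : AddCircle (1 : ℝ) → M → M)
    (f : AddCircle (1 : ℝ) × M → AddCircle (1 : ℝ) × M)
    (hf : ∀ p, f p = (p.1 + (ω : AddCircle (1 : ℝ)), F p.1 p.2))
    (hcont : Continuous f)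
    (A : Set (AddCircle (1 : ℝ) × M)) (hA : IsCompact A) (hinv : f '' A = A)
    (hiso : ∀ x ∈ A, x ∈ closure (A \ {x}))
    (htrans : ∃ x ∈ A, A ⊆ closure (Set.range fun n : ℕ => f^[n] x))
    (μ : Measure (AddCircle (1 : ℝ) × M)) [IsFiniteMeasure μ]
    (hμinv : ∀ s, MeasurableSet s → μ (f ⁻¹' s) = μ s)
    (hμA : μ Aᶜ = 0)
    (hμfull : ∀ U : Set (AddCircle (1 : ℝ) × M), IsOpen U → (U ∩ A).Nonempty → 0 < μ U)
    (hpinch : ∃ θ : AddCircle (1 : ℝ), ∃ ξ : M, {ξ' : M | (θ, ξ') ∈ A} = {ξ}) :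
    (∃ ε > 0, ∀ x ∈ A, ∀ δ > 0, ∃ y ∈ A, ∃ z ∈ A,
        dist x y ≤ δ ∧ dist x z ≤ δ ∧ ∃ n : ℕ, ε ≤ dist (f^[n] y) (f^[n] z)) ∨
    (∃ ψ : AddCircle (1 : ℝ) → M, Continuous ψ ∧
        A = {p : AddCircle (1 : ℝ) × M | p.2 = ψ p.1}) :=
  pinched_dichotomy_general ω hω F f hf hcont A hA hinv htrans μ hμinv hμA hμfull hpinch
end

section
/- Let (fⁿ|_𝒜)_{n∈ℕ} be equicontinuous for a compact invariant set 𝒜 of a quasiperiodically forced map f over an irrational rotation. If the set {θ ∈ 𝕋¹ : diam(𝒜_θ) < δ} is nonempty and open for every δ > 0, and fiber images satisfy fⁿ(𝒜_θ) = 𝒜_{θ+nω}, then every fiber 𝒜_θ is a singleton, i.e., 𝒜 is the graph of a (necessarily continuous) function 𝕋¹ → M. -/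
open Set Metric Filter

private lemma norm_coe_le_abs (x : ℝ) : ‖(x : AddCircle (1:ℝ))‖ ≤ |x| := by
  rw [AddCircle.norm_eq]
  simpa using round_le x 0

private lemma fill_lemma {ε r : ℝ} (hr : 0 < r) (hrε : r < ε) (z : AddCircle (1:ℝ)) :
    ∃ j : ℕ, ‖((j * r : ℝ) : AddCircle (1:ℝ)) - z‖ < ε := by
  induction z using QuotientAddGroup.induction_on with
  | H s =>
    set t : ℝ := Int.fract s with ht
    have hts : ((t : ℝ) : AddCircle (1:ℝ)) = (s : AddCircle (1:ℝ)) := by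
      have h0 : (((⌊s⌋ : ℝ)) : AddCircle (1:ℝ)) = 0 :=
        (AddCircle.coe_eq_zero_iff _).mpr ⟨⌊s⌋, by simp⟩
      rw [ht, Int.fract, AddCircle.coe_sub, h0, sub_zero]
    refine ⟨⌈t / r⌉₊, ?_⟩
    have ht0 : 0 ≤ t := Int.fract_nonneg s
    have h1 : t ≤ (⌈t / r⌉₊ : ℝ) * r := by
      have := Nat.le_ceil (t / r)
      calc t = t / r * r := by field_simp
      _ ≤ (⌈t / r⌉₊ : ℝ) * r := by nlinarith [Nat.le_ceil (t / r)]
    have h2 : (⌈t / r⌉₊ : ℝ) * r < t + r := by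
      have hc : (⌈t / r⌉₊ : ℝ) < t / r + 1 := Nat.ceil_lt_add_one (div_nonneg ht0 hr.le)
      have : t / r * r = t := by field_simp
      nlinarith
    have key : ((⌈t / r⌉₊ * r : ℝ) : AddCircle (1:ℝ)) - (s : AddCircle (1:ℝ))
        = (((⌈t / r⌉₊ : ℝ) * r - t : ℝ) : AddCircle (1:ℝ)) := by
      rw [AddCircle.coe_sub, hts]
    rw [show ((QuotientAddGroup.mk s : AddCircle (1:ℝ))) = (s : AddCircle (1:ℝ)) from rfl, key]
    calc ‖(((⌈t / r⌉₊ : ℝ) * r - t : ℝ) : AddCircle (1:ℝ))‖ ≤ |(⌈t / r⌉₊ : ℝ) * r - t| :=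
          norm_coe_le_abs _
    _ < ε := by rw [abs_of_nonneg (by linarith)]; linarith

private lemma exists_small_multiple (a : ℝ) (ha : Irrational a) {η : ℝ} (hη : 0 < η) :
    ∃ (k : ℕ) (r : ℝ), 0 < k ∧ r ≠ 0 ∧ |r| < η ∧
      ((r : ℝ) : AddCircle (1:ℝ)) = k • ((a : ℝ) : AddCircle (1:ℝ)) := by
  haveI : Fact ((0:ℝ) < 1) := ⟨one_pos⟩
  set g : ℕ → AddCircle (1:ℝ) := fun n => n • (a : AddCircle (1:ℝ)) with hg
  obtain ⟨x, -, φ, hφ, hx⟩ := isCompact_univ.tendsto_subseq (x := g) (fun n => mem_univ _)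
  rw [Metric.tendsto_atTop] at hx
  obtain ⟨N, hN⟩ := hx (η / 2) (by positivity)
  have h1 := hN N le_rfl
  have h2 := hN (N + 1) (by omega)
  obtain ⟨k, hk0, hk⟩ : ∃ k, 0 < k ∧ φ (N + 1) = φ N + k := by
    have hlt : φ N < φ (N + 1) := hφ (by omega)
    exact ⟨φ (N + 1) - φ N, by omega, by omega⟩
  have hdist : ‖(k : ℕ) • (a : AddCircle (1:ℝ))‖ < η := by
    have hgk : g (φ (N + 1)) - g (φ N) = (k : ℕ) • (a : AddCircle (1:ℝ)) := by
      rw [hg, hk]; simp [add_nsmul]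
    calc ‖(k : ℕ) • (a : AddCircle (1:ℝ))‖ = dist (g (φ (N + 1))) (g (φ N)) := by
          rw [dist_eq_norm, hgk]
    _ ≤ dist (g (φ (N + 1))) x + dist (g (φ N)) x := dist_triangle_right _ _ _
    _ < η / 2 + η / 2 := by exact add_lt_add h2 h1
    _ = η := by ring
  have hka : (k : ℕ) • (a : AddCircle (1:ℝ)) = ((k * a : ℝ) : AddCircle (1:ℝ)) := by
    rw [← AddCircle.coe_nsmul]; norm_num
  have hne : (k : ℕ) • (a : AddCircle (1:ℝ)) ≠ 0 := by
    rw [hka]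
    intro h0
    obtain ⟨n, hn⟩ := (AddCircle.coe_eq_zero_iff _).mp h0
    rw [zsmul_eq_mul, mul_one] at hn
    have hk' : (k : ℝ) ≠ 0 := by positivity
    exact ha ⟨(n : ℚ) / (k : ℚ), by push_cast; field_simp; linarith [hn]⟩
  set x₀ : ℝ := k * a with hx₀
  refine ⟨k, x₀ - round x₀, hk0, ?_, ?_, ?_⟩
  · intro h0
    apply hne
    rw [hka]
    have hx0 : x₀ = ((round x₀ : ℤ) : ℝ) := by
      have := sub_eq_zero.mp h0; linarith [this]
    rw [hx0]
    exact (AddCircle.coe_eq_zero_iff (p := (1:ℝ)) (x := ((round x₀ : ℤ) : ℝ))).mpr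
      ⟨round x₀, by simp⟩
  · have : ‖(x₀ : AddCircle (1:ℝ))‖ = |x₀ - round x₀| := by
      rw [AddCircle.norm_eq]; simp
    rw [← this, ← hka]; exact hdist
  · have hz : (((round x₀ : ℤ) : ℝ) : AddCircle (1:ℝ)) = 0 :=
      (AddCircle.coe_eq_zero_iff (p := (1:ℝ)) (x := ((round x₀ : ℤ) : ℝ))).mpr
        ⟨round x₀, by simp⟩
    rw [AddCircle.coe_sub, hz, sub_zero, hka]

private lemma denseRange_nsmul_irr (a : ℝ) (ha : Irrational a) :
    DenseRange (fun n : ℕ => n • ((a : ℝ) : AddCircle (1:ℝ))) := by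
  rw [Metric.denseRange_iff]
  intro z ε hε
  obtain ⟨k, r, hk0, hr0, hrη, hcoe⟩ := exists_small_multiple a ha hε
  have hjk : ∀ j : ℕ, (j * k) • ((a:ℝ) : AddCircle (1:ℝ)) = ((j * r : ℝ) : AddCircle (1:ℝ)) := by
    intro j
    rw [mul_smul, ← hcoe, ← AddCircle.coe_nsmul]
    norm_num
  rcases hr0.lt_or_gt with hneg | hpos
  · obtain ⟨j, hj⟩ := fill_lemma (ε := ε) (r := -r) (by linarith)
      (by rw [abs_of_neg hneg] at hrη; linarith) (-z)
    refine ⟨j * k, ?_⟩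
    rw [dist_eq_norm, norm_sub_rev, hjk j]
    have : ((j * r : ℝ) : AddCircle (1:ℝ)) - z = -(((j * (-r) : ℝ) : AddCircle (1:ℝ)) - (-z)) := by
      rw [show (j * (-r) : ℝ) = -(j * r) by ring, AddCircle.coe_neg]
      abel
    rw [this, norm_neg]
    exact hj
  · obtain ⟨j, hj⟩ := fill_lemma (ε := ε) (r := r) hpos
      (by rw [abs_of_pos hpos] at hrη; exact hrη) z
    refine ⟨j * k, ?_⟩
    rw [dist_eq_norm, norm_sub_rev, hjk j]
    exact hj

/-- If `(fⁿ|𝒜)` is fiberwise equicontinuous (small fiber diameter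
propagates to all forward images), the set of `θ` with small fiber diameter is
nonempty and open for every `δ > 0`, and fiber images satisfy
`fⁿ(𝒜_θ) = 𝒜_{θ+nω}`, then every fiber of `𝒜` is a singleton and `𝒜` is the graph
of a continuous function. -/
theorem graph_of_equicontinuous_pinched {M : Type*} [MetricSpace M]
    (ω : ℝ) (hω : Irrational ω)
    (F : AddCircle (1 : ℝ) → M → M)
    (f : AddCircle (1 : ℝ) × M → AddCircle (1 : ℝ) × M)
    (hf : ∀ p, f p = (p.1 + (ω : AddCircle (1 : ℝ)), F p.1 p.2))
    (hcont : Continuous f)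
    (A : Set (AddCircle (1 : ℝ) × M)) (hA : IsCompact A) (hAne : A.Nonempty)
    (hfib : ∀ (n : ℕ) (θ : AddCircle (1 : ℝ)),
        (fun ξ => (f^[n] (θ, ξ)).2) '' {ξ : M | (θ, ξ) ∈ A}
          = {ξ : M | (θ + n • (ω : AddCircle (1 : ℝ)), ξ) ∈ A})
    (hequi : ∀ ε > 0, ∃ δ > 0, ∀ θ : AddCircle (1 : ℝ),
        Metric.diam {ξ : M | (θ, ξ) ∈ A} < δ →
          ∀ n : ℕ, Metric.diam {ξ : M | (θ + n • (ω : AddCircle (1 : ℝ)), ξ) ∈ A} < ε)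
    (hopen : ∀ δ > 0,
        IsOpen {θ : AddCircle (1 : ℝ) | Metric.diam {ξ : M | (θ, ξ) ∈ A} < δ} ∧
        {θ : AddCircle (1 : ℝ) | Metric.diam {ξ : M | (θ, ξ) ∈ A} < δ}.Nonempty) :
    (∀ θ : AddCircle (1 : ℝ), ∃ ξ : M, {ξ' : M | (θ, ξ') ∈ A} = {ξ}) ∧
    ∃ ψ : AddCircle (1 : ℝ) → M, Continuous ψ ∧
      A = {p : AddCircle (1 : ℝ) × M | p.2 = ψ p.1} := by
  -- every fiber is nonempty
  have hproj : ∀ θ : AddCircle (1:ℝ), ∃ ξ : M, (θ, ξ) ∈ A := by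
    obtain ⟨⟨θ₁, ξ₁⟩, hp⟩ := hAne
    have hsub : range (fun n : ℕ => θ₁ + n • ((ω:ℝ) : AddCircle (1:ℝ))) ⊆ Prod.fst '' A := by
      rintro x ⟨n, rfl⟩
      have hne : ({ξ : M | (θ₁, ξ) ∈ A}).Nonempty := ⟨ξ₁, hp⟩
      obtain ⟨ξ, hξ⟩ := hne.image (fun ξ => (f^[n] (θ₁, ξ)).2)
      rw [hfib n θ₁] at hξ
      exact ⟨(θ₁ + n • ((ω:ℝ) : AddCircle (1:ℝ)), ξ), hξ, rfl⟩
    have hdr : DenseRange (fun n : ℕ => θ₁ + n • ((ω:ℝ) : AddCircle (1:ℝ))) := by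
      have hsurj : Function.Surjective (fun x : AddCircle (1:ℝ) => θ₁ + x) :=
        fun b => ⟨b - θ₁, by simp⟩
      exact hsurj.denseRange.comp (denseRange_nsmul_irr ω hω)
        (continuous_const.add continuous_id)
    have hclosed : IsClosed (Prod.fst '' A) := (hA.image continuous_fst).isClosed
    intro θ
    have hAuniv : Prod.fst '' A = univ := by
      have h1 : Dense (Prod.fst '' A) := hdr.mono hsub
      rw [← hclosed.closure_eq]
      exact h1.closure_eq
    have : θ ∈ Prod.fst '' A := hAuniv ▸ mem_univ θ
    obtain ⟨⟨θ', ξ⟩, hmem, h⟩ := this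
    exact ⟨ξ, by rwa [← h]⟩
  -- every fiber has arbitrarily small diameter
  have hdiam : ∀ θ : AddCircle (1:ℝ), ∀ ε > 0, Metric.diam {ξ : M | (θ, ξ) ∈ A} < ε := by
    intro θ ε hε
    obtain ⟨δ, hδ0, hδ⟩ := hequi ε hε
    obtain ⟨hUo, hUne⟩ := hopen δ hδ0
    have hdr : DenseRange (fun n : ℕ => θ + n • (((-ω : ℝ)) : AddCircle (1:ℝ))) := by
      have hsurj : Function.Surjective (fun x : AddCircle (1:ℝ) => θ + x) :=
        fun b => ⟨b - θ, by simp⟩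
      exact hsurj.denseRange.comp (denseRange_nsmul_irr (-ω) hω.neg)
        (continuous_const.add continuous_id)
    obtain ⟨n, hn⟩ := hdr.exists_mem_open hUo hUne
    have hsm := hδ _ hn n
    have key : (θ + n • (((-ω : ℝ)) : AddCircle (1:ℝ))) + n • ((ω:ℝ) : AddCircle (1:ℝ)) = θ := by
      rw [AddCircle.coe_neg, smul_neg]; abel
    rwa [key] at hsm
  -- fibers are singletons
  have hsing : ∀ θ : AddCircle (1:ℝ), ∃ ξ : M, {ξ' : M | (θ, ξ') ∈ A} = {ξ} := by
    intro θ
    obtain ⟨ξ, hξ⟩ := hproj θ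
    refine ⟨ξ, ?_⟩
    ext ξ'
    simp only [mem_setOf_eq, mem_singleton_iff]
    constructor
    · intro h
      have hb : Bornology.IsBounded {ξ' : M | (θ, ξ') ∈ A} :=
        ((hA.image continuous_snd).isBounded).subset (fun x hx => ⟨(θ, x), hx, rfl⟩)
      have hd : dist ξ' ξ ≤ Metric.diam {ξ' : M | (θ, ξ') ∈ A} :=
        Metric.dist_le_diam_of_mem hb h hξ
      have hz : dist ξ' ξ ≤ 0 := by
        by_contra hc
        push_neg at hc
        exact absurd (hdiam θ (dist ξ' ξ) hc) hd.not_gt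
      exact dist_le_zero.mp hz
    · rintro rfl; exact hξ
  refine ⟨hsing, ?_⟩
  choose ψ hψ using hsing
  have hmem : ∀ θ, (θ, ψ θ) ∈ A := by
    intro θ
    have h : ψ θ ∈ ({ψ θ} : Set M) := rfl
    rwa [← hψ θ] at h
  have hAeq : A = {p : AddCircle (1 : ℝ) × M | p.2 = ψ p.1} := by
    ext ⟨θ, ξ⟩
    simp only [mem_setOf_eq]
    constructor
    · intro h
      have : ξ ∈ {ξ' : M | (θ, ξ') ∈ A} := h
      rw [hψ θ] at this
      exact this
    · intro h
      rw [h]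
      exact hmem θ
  refine ⟨ψ, ?_, hAeq⟩
  rw [continuous_iff_continuousAt]
  intro θ
  rw [ContinuousAt, tendsto_def]
  intro s hs
  obtain ⟨V, hVs, hVo, hV⟩ := _root_.mem_nhds_iff.mp hs
  have hK : IsCompact (A ∩ Prod.snd ⁻¹' Vᶜ) :=
    hA.inter_right (hVo.isClosed_compl.preimage continuous_snd)
  have hC : IsClosed (Prod.fst '' (A ∩ Prod.snd ⁻¹' Vᶜ)) := (hK.image continuous_fst).isClosed
  have hθ : θ ∉ Prod.fst '' (A ∩ Prod.snd ⁻¹' Vᶜ) := by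
    rintro ⟨⟨θ'', ξ'⟩, ⟨hmemA, hnot⟩, h⟩
    have hθθ : θ'' = θ := h
    subst hθθ
    have hξV : ξ' ∈ {ξm : M | (θ'', ξm) ∈ A} := hmemA
    rw [hψ θ''] at hξV
    rw [hξV] at hnot
    exact hnot hV
  have hW : (Prod.fst '' (A ∩ Prod.snd ⁻¹' Vᶜ))ᶜ ∈ nhds θ := hC.isOpen_compl.mem_nhds hθ
  filter_upwards [hW] with θ' hθ'
  have hvv : ψ θ' ∈ V := by
    by_contra hc
    exact hθ' ⟨(θ', ψ θ'), ⟨hmem θ', hc⟩, rfl⟩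
  exact hVs hvv
end

section
/- Let F be a lift of a quasiperiodically forced circle homeomorphism f homotopic to the identity, with fibered rotation number ρ_F. If there exist dense sets of fibers θ on which the deviations F_θⁿ(ξ) − ξ − nρ_F are bounded above, and a dense set of fibers on which they are unbounded above, then f has sensitive dependence on initial conditions on 𝕋². -/
open Filter

/-- If a lift `F` of a quasiperiodically forced circle homeomorphism
`f` homotopic to the identity has a dense set of fibers with deviations from the
rotation number bounded above and a dense set of fibers with deviations unbounded
above, then `f` has sensitive dependence on initial conditions on `𝕋²`. -/
theorem rho_unbounded_sensitive
    (ω : ℝ) (hω : Irrational ω)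
    (f : AddCircle (1 : ℝ) × AddCircle (1 : ℝ) → AddCircle (1 : ℝ) × AddCircle (1 : ℝ))
    (hfcont : Continuous f)
    (F : AddCircle (1 : ℝ) × ℝ → AddCircle (1 : ℝ) × ℝ) (hFcont : Continuous F)
    (hFskew : ∀ p : AddCircle (1 : ℝ) × ℝ, (F p).1 = p.1 + (ω : AddCircle (1 : ℝ)))
    (hlift : ∀ p : AddCircle (1 : ℝ) × ℝ,
        f (p.1, (p.2 : AddCircle (1 : ℝ))) = ((F p).1, ((F p).2 : AddCircle (1 : ℝ))))
    (ρ : ℝ)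
    (hρ : ∀ (θ : AddCircle (1 : ℝ)) (ξ : ℝ),
        Tendsto (fun n : ℕ => ((F^[n] (θ, ξ)).2 - ξ) / n) atTop (nhds ρ))
    (hbdd : Dense {θ : AddCircle (1 : ℝ) | ∀ ξ : ℝ,
        BddAbove (Set.range fun n : ℕ => (F^[n] (θ, ξ)).2 - ξ - n * ρ)})
    (hunbdd : Dense {θ : AddCircle (1 : ℝ) | ∀ ξ : ℝ,
        ¬ BddAbove (Set.range fun n : ℕ => (F^[n] (θ, ξ)).2 - ξ - n * ρ)}) :
    ∃ ε > 0, ∀ x : AddCircle (1 : ℝ) × AddCircle (1 : ℝ), ∀ δ > 0,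
      ∃ y ∈ Metric.closedBall x δ, ∃ z ∈ Metric.closedBall x δ,
        ∃ n : ℕ, ε ≤ dist (f^[n] y) (f^[n] z) := by
  -- norm formula on the circle
  have hnorm : ∀ r : ℝ, ‖(r : AddCircle (1:ℝ))‖ = |r - round r| := by
    intro r
    rw [AddCircle.norm_eq]
    norm_num
  -- Step 1: the "degree" k : all fibers are lifted with the same integer shift
  have hdeg : ∀ p : AddCircle (1:ℝ) × ℝ, ∃ m : ℤ,
      (F (p.1, p.2 + 1)).2 - (F p).2 = m := by
    intro p
    have h1 : ((p.2 + 1 : ℝ) : AddCircle (1:ℝ)) = (p.2 : AddCircle (1:ℝ)) :=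
      AddCircle.coe_add_period 1 p.2
    have h2 : f (p.1, ((p.2 + 1 : ℝ) : AddCircle (1:ℝ))) = f (p.1, (p.2 : AddCircle (1:ℝ))) := by
      rw [h1]
    rw [hlift (p.1, p.2 + 1), hlift p] at h2
    have h3 : (((F (p.1, p.2 + 1)).2 : ℝ) : AddCircle (1:ℝ)) = ((F p).2 : AddCircle (1:ℝ)) :=
      congrArg Prod.snd h2
    have h4 : (((F (p.1, p.2 + 1)).2 - (F p).2 : ℝ) : AddCircle (1:ℝ)) = 0 := by
      rw [QuotientAddGroup.mk_sub]
      rw [show (QuotientAddGroup.mk (F (p.1, p.2 + 1)).2 : AddCircle (1:ℝ))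
        = (((F (p.1, p.2 + 1)).2 : ℝ) : AddCircle (1:ℝ)) from rfl]
      rw [show (QuotientAddGroup.mk (F p).2 : AddCircle (1:ℝ))
        = (((F p).2 : ℝ) : AddCircle (1:ℝ)) from rfl]
      rw [h3, sub_self]
    obtain ⟨m, hm⟩ := (AddCircle.coe_eq_zero_iff 1).mp h4
    exact ⟨m, by simpa using hm.symm⟩
  have gcont : Continuous fun p : AddCircle (1:ℝ) × ℝ =>
      (F (p.1, p.2 + 1)).2 - (F p).2 := by
    apply Continuous.sub
    · exact (continuous_snd.comp (hFcont.comp (continuous_fst.prodMk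
        (continuous_snd.add continuous_const))))
    · exact continuous_snd.comp hFcont
  -- the integer shift is constant
  have hconst : ∀ p q : AddCircle (1:ℝ) × ℝ,
      (F (p.1, p.2 + 1)).2 - (F p).2 = (F (q.1, q.2 + 1)).2 - (F q).2 := by
    intro p q
    by_contra hne
    obtain ⟨mp, hmp⟩ := hdeg p
    obtain ⟨mq, hmq⟩ := hdeg q
    rcases lt_or_gt_of_ne hne with hlt | hlt
    · have hmem : ((mp : ℝ) + 1/2) ∈ Set.Icc ((F (p.1, p.2+1)).2 - (F p).2)
          ((F (q.1, q.2+1)).2 - (F q).2) := by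
        constructor
        · rw [hmp]; linarith
        · have h5 : (mp : ℝ) < mq := by rw [← hmp, ← hmq]; exact hlt
          have h6 : mp < mq := by exact_mod_cast h5
          have h7 : (mp : ℝ) + 1 ≤ mq := by exact_mod_cast h6
          rw [hmq]; linarith
      obtain ⟨r, hr⟩ := intermediate_value_univ p q gcont hmem
      have hr' : (F (r.1, r.2 + 1)).2 - (F r).2 = (mp : ℝ) + 1/2 := hr
      obtain ⟨mr, hmr⟩ := hdeg r
      rw [hr'] at hmr
      have h8 : (2 * (mr:ℝ)) = 2 * (mp:ℝ) + 1 := by linarith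
      have h9 : (2 * mr : ℤ) = 2 * mp + 1 := by exact_mod_cast h8
      omega
    · have hmem : ((mq : ℝ) + 1/2) ∈ Set.Icc ((F (q.1, q.2+1)).2 - (F q).2)
          ((F (p.1, p.2+1)).2 - (F p).2) := by
        constructor
        · rw [hmq]; linarith
        · have h5 : (mq : ℝ) < mp := by rw [← hmp, ← hmq]; exact hlt
          have h6 : mq < mp := by exact_mod_cast h5
          have h7 : (mq : ℝ) + 1 ≤ mp := by exact_mod_cast h6
          rw [hmp]; linarith
      obtain ⟨r, hr⟩ := intermediate_value_univ q p gcont hmem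
      have hr' : (F (r.1, r.2 + 1)).2 - (F r).2 = (mq : ℝ) + 1/2 := hr
      obtain ⟨mr, hmr⟩ := hdeg r
      rw [hr'] at hmr
      have h8 : (2 * (mr:ℝ)) = 2 * (mq:ℝ) + 1 := by linarith
      have h9 : (2 * mr : ℤ) = 2 * mq + 1 := by exact_mod_cast h8
      omega
  obtain ⟨k, hk⟩ : ∃ k : ℝ, ∀ θ : AddCircle (1:ℝ), ∀ ξ : ℝ,
      (F (θ, ξ + 1)).2 = (F (θ, ξ)).2 + k := by
    refine ⟨(F ((0:AddCircle (1:ℝ)), (0:ℝ) + 1)).2 - (F (0, 0)).2, fun θ ξ => ?_⟩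
    have := hconst (θ, ξ) (0, 0)
    simp only at this
    linarith
  -- natural translation
  have hkN : ∀ (n : ℕ) (θ : AddCircle (1:ℝ)) (ξ : ℝ),
      (F (θ, ξ + n)).2 = (F (θ, ξ)).2 + n * k := by
    intro n
    induction n with
    | zero => intro θ ξ; simp
    | succ n ih =>
        intro θ ξ
        have e : (ξ + ((n+1 : ℕ) : ℝ)) = (ξ + (n:ℝ)) + 1 := by push_cast; ring
        rw [e, hk θ (ξ + (n:ℝ)), ih θ ξ]
        push_cast
        ring
  -- integer translation
  have hkZ : ∀ (m : ℤ) (θ : AddCircle (1:ℝ)) (ξ : ℝ),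
      (F (θ, ξ + m)).2 = (F (θ, ξ)).2 + m * k := by
    intro m θ ξ
    rcases le_or_gt 0 m with hm | hm
    · obtain ⟨n, rfl⟩ := Int.eq_ofNat_of_zero_le hm
      have := hkN n θ ξ
      push_cast
      push_cast at this
      linarith
    · obtain ⟨n, rfl⟩ := Int.exists_eq_neg_ofNat (le_of_lt hm)
      have h2 := hkN n θ (ξ - n)
      rw [show (ξ - (n:ℝ)) + (n:ℝ) = ξ by ring] at h2
      have e : ξ + ((-(n:ℤ) : ℤ) : ℝ) = ξ - (n:ℝ) := by push_cast; ring
      rw [e]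
      push_cast
      linarith
  -- Step 2: uniform continuity on a compact strip
  obtain ⟨ε₀, hε₀pos, hε₀⟩ : ∃ ε₀ > 0, ∀ p q : AddCircle (1:ℝ) × ℝ,
      p.2 ∈ Set.Icc (-1:ℝ) 2 → q.2 ∈ Set.Icc (-1:ℝ) 2 → dist p q < ε₀ →
      |(F p).2 - (F q).2| < 4⁻¹ := by
    have hK : IsCompact ((Set.univ : Set (AddCircle (1:ℝ))) ×ˢ Set.Icc (-1:ℝ) 2) :=
      isCompact_univ.prod isCompact_Icc
    have hUC := hK.uniformContinuousOn_of_continuous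
      ((continuous_snd.comp hFcont).continuousOn)
    rw [Metric.uniformContinuousOn_iff] at hUC
    obtain ⟨δ₀, hδ₀, h⟩ := hUC 4⁻¹ (by norm_num)
    refine ⟨δ₀, hδ₀, fun p q hp hq hd => ?_⟩
    have := h p ⟨Set.mem_univ _, hp⟩ q ⟨Set.mem_univ _, hq⟩ hd
    rwa [Real.dist_eq] at this
  set ε : ℝ := min ε₀ 8⁻¹ with hε
  have hεpos : 0 < ε := lt_min hε₀pos (by norm_num)
  have hεle : ε ≤ 8⁻¹ := min_le_right _ _
  have hεle0 : ε ≤ ε₀ := min_le_left _ _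
  -- key step estimate
  have hkey : ∀ (θ θ' : AddCircle (1:ℝ)) (a b : ℝ), dist θ θ' < ε → |b - a| < ε →
      |(F (θ', b)).2 - (F (θ, a)).2| < 4⁻¹ := by
    intro θ θ' a b hθ hab
    set N : ℤ := ⌊a⌋ with hN
    have hfl1 : (0:ℝ) ≤ a - N := by
      have := Int.floor_le a; linarith
    have hfl2 : a - N < 1 := by
      have := Int.lt_floor_add_one a; linarith
    have hmem1 : (a - N : ℝ) ∈ Set.Icc (-1:ℝ) 2 := ⟨by linarith, by linarith⟩
    have hmem2 : (b - N : ℝ) ∈ Set.Icc (-1:ℝ) 2 := by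
      have h1 : |b - a| < 1 := lt_of_lt_of_le hab (le_trans hεle (by norm_num))
      rw [abs_lt] at h1
      exact ⟨by linarith, by linarith⟩
    have hdist : dist ((θ, a - (N:ℝ)) : AddCircle (1:ℝ) × ℝ) (θ', b - (N:ℝ)) < ε₀ := by
      rw [Prod.dist_eq]
      apply lt_of_lt_of_le _ hεle0
      apply max_lt hθ
      rw [Real.dist_eq]
      rw [show (a - (N:ℝ)) - (b - (N:ℝ)) = -(b - a) by ring, abs_neg]
      exact hab
    have hF := hε₀ (θ, a - (N:ℝ)) (θ', b - (N:ℝ)) hmem1 hmem2 hdist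
    have e1 : (F (θ, a)).2 = (F (θ, a - (N:ℝ))).2 + N * k := by
      have := hkZ N θ (a - N)
      rw [show (a - (N:ℝ)) + (N:ℝ) = a by ring] at this
      exact this
    have e2 : (F (θ', b)).2 = (F (θ', b - (N:ℝ))).2 + N * k := by
      have := hkZ N θ' (b - N)
      rw [show (b - (N:ℝ)) + (N:ℝ) = b by ring] at this
      exact this
    rw [e1, e2,
      show (F (θ', b - (N:ℝ))).2 + (N:ℝ) * k - ((F (θ, a - (N:ℝ))).2 + (N:ℝ) * k)
        = -((F (θ, a - (N:ℝ))).2 - (F (θ', b - (N:ℝ))).2) by ring, abs_neg]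
    exact hF
  refine ⟨ε, hεpos, fun x δ hδ => ?_⟩
  -- choose nearby bounded and unbounded fibers
  have hr : 0 < min δ (ε/3) := lt_min hδ (by positivity)
  obtain ⟨θb, hθb_ball, hθb⟩ := Metric.dense_iff.mp hbdd x.1 _ hr
  obtain ⟨θu, hθu_ball, hθu⟩ := Metric.dense_iff.mp hunbdd x.1 _ hr
  obtain ⟨ξ, hξ⟩ : ∃ ξ : ℝ, (ξ : AddCircle (1:ℝ)) = x.2 := QuotientAddGroup.mk_surjective x.2
  refine ⟨(θb, x.2), ?_, (θu, x.2), ?_, ?_⟩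
  · rw [Metric.mem_closedBall, Prod.dist_eq]
    simp only [dist_self]
    have h1 : dist θb x.1 ≤ δ :=
      le_of_lt (lt_of_lt_of_le (Metric.mem_ball.mp hθb_ball) (min_le_left _ _))
    exact max_le h1 hδ.le
  · rw [Metric.mem_closedBall, Prod.dist_eq]
    simp only [dist_self]
    have h1 : dist θu x.1 ≤ δ :=
      le_of_lt (lt_of_lt_of_le (Metric.mem_ball.mp hθu_ball) (min_le_left _ _))
    exact max_le h1 hδ.le
  by_contra hcon
  push_neg at hcon
  -- distance between the two fibers
  have hθdist : dist θb θu < ε := by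
    calc dist θb θu ≤ dist θb x.1 + dist x.1 θu := dist_triangle _ _ _
    _ < min δ (ε/3) + min δ (ε/3) := by
        have h1 := Metric.mem_ball.mp hθb_ball
        have h2 := Metric.mem_ball.mp hθu_ball
        rw [dist_comm x.1 θu]
        linarith
    _ ≤ ε/3 + ε/3 := by
        have := min_le_right δ (ε/3); linarith
    _ < ε := by linarith
  -- lifted orbits
  set a : ℕ → ℝ := fun n => (F^[n] (θb, ξ)).2 with ha
  set b : ℕ → ℝ := fun n => (F^[n] (θu, ξ)).2 with hb
  set c : ℕ → ℝ := fun n => b n - a n with hc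
  -- first coordinates rotate together
  have hfst : ∀ n : ℕ, (F^[n] (θb, ξ)).1 - (F^[n] (θu, ξ)).1 = θb - θu := by
    intro n
    induction n with
    | zero => simp
    | succ n ih =>
        rw [Function.iterate_succ_apply', Function.iterate_succ_apply',
          hFskew, hFskew]
        abel_nf
        abel_nf at ih
        exact ih
  -- projection of the orbit
  have hproj : ∀ (n : ℕ) (θ : AddCircle (1:ℝ)) (ζ : ℝ),
      f^[n] (θ, (ζ : AddCircle (1:ℝ)))
        = ((F^[n] (θ, ζ)).1, ((F^[n] (θ, ζ)).2 : AddCircle (1:ℝ))) := by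
    intro n
    induction n with
    | zero => intro θ ζ; simp
    | succ n ih =>
        intro θ ζ
        rw [Function.iterate_succ_apply', ih θ ζ, Function.iterate_succ_apply']
        exact hlift (F^[n] (θ, ζ))
  -- the circle distance of the second coordinates stays < ε
  have hsnd : ∀ n : ℕ, ‖((c n : ℝ) : AddCircle (1:ℝ))‖ < ε := by
    intro n
    have h1 := hcon n
    rw [← hξ, hproj n θb ξ, hproj n θu ξ] at h1
    have h2 : dist ((a n : ℝ) : AddCircle (1:ℝ)) ((b n : ℝ) : AddCircle (1:ℝ)) < ε := by
      refine lt_of_le_of_lt ?_ h1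
      rw [Prod.dist_eq]
      exact le_max_right _ _
    rw [dist_eq_norm] at h2
    have e : ((a n : ℝ) : AddCircle (1:ℝ)) - ((b n : ℝ) : AddCircle (1:ℝ))
        = (((a n - b n : ℝ)) : AddCircle (1:ℝ)) := (QuotientAddGroup.mk_sub _ _ _).symm
    rw [e] at h2
    have e2 : (((c n : ℝ)) : AddCircle (1:ℝ)) = -(((a n - b n : ℝ)) : AddCircle (1:ℝ)) := by
      rw [show (c n : ℝ) = -(a n - b n) by simp only [hc]; ring]
      exact QuotientAddGroup.mk_neg _ _
    rw [e2, norm_neg]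
    exact h2
  -- main induction: |c n| < ε
  have hcn : ∀ n : ℕ, |c n| < ε := by
    intro n
    induction n with
    | zero => simpa [hc, ha, hb] using hεpos
    | succ n ih =>
        have hstep : |c (n+1)| < 4⁻¹ := by
          have hd : dist (F^[n] (θb, ξ)).1 (F^[n] (θu, ξ)).1 < ε := by
            rw [dist_eq_norm, hfst n, ← dist_eq_norm]
            exact hθdist
          have hkk := hkey (F^[n] (θb, ξ)).1 (F^[n] (θu, ξ)).1 (a n) (b n) hd ih
          have ea : F^[n+1] (θb, ξ) = F ((F^[n] (θb, ξ)).1, a n) := by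
            rw [Function.iterate_succ_apply']
          have eb : F^[n+1] (θu, ξ) = F ((F^[n] (θu, ξ)).1, b n) := by
            rw [Function.iterate_succ_apply']
          have : |(F ((F^[n] (θu, ξ)).1, b n)).2 - (F ((F^[n] (θb, ξ)).1, a n)).2| < 4⁻¹ := hkk
          rw [← ea, ← eb] at this
          exact this
        have h2 := hsnd (n+1)
        rw [hnorm] at h2
        have hround : round (c (n+1)) = 0 := by
          rw [round_eq_zero_iff]
          have := abs_lt.mp hstep
          constructor
          · linarith
          · linarith
        rw [hround] at h2
        simpa using h2
  -- contradiction with boundedness/unboundedness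
  obtain ⟨C, hC⟩ := hθb ξ
  have hCb : ∀ n : ℕ, a n - ξ - n * ρ ≤ C := fun n => hC ⟨n, rfl⟩
  obtain ⟨v, ⟨n, hn⟩, hv⟩ := not_bddAbove_iff.mp (hθu ξ) (C + 1)
  have hn' : b n - ξ - n * ρ = v := hn
  have hc1 : 1 < c n := by
    have h1 := hCb n
    simp only [hc]
    linarith
  have h2 := hcn n
  have h3 : |c n| < 1 := lt_of_lt_of_le h2 (le_trans hεle (by norm_num))
  rw [abs_lt] at h3
  linarith
end
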